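/- arXiv:2604.25807 — 8 statements merged into one kernel-verified Lean document; each statement's English description precedes it below -/
import Mathlib

section
/- Let n ≥ 2 be even, let φ_1 = 0 and φ_{n+1} = 0, let φ_2,…,φ_n be arbitrary real phases, and let Γ = Σ_{j=1}^n (−1)^{j−1} Δ_j where Δ_j = φ_j − φ_{j+1}. Fix real α, β and write Tr(U_0† U_ε) = Σ_{k=0}^{n/2} a_k ε^{2k}. If a_1 = a_2 = ⋯ = a_{n/2−1} = 0, then a_{n/2} = 2(−1)^{n/2} cos(nα + Γ/2) − 2. Consequently, for any fixed choice of phases (independent of α), a_{n/2} cannot vanish identically as a function of α; i.e., no choice of n phases makes all nonconstant coefficients of G(ε) − 1 through order ε^n vanish for arbitrary α. -/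
open Complex Matrix Finset

/-- The single-pulse propagator `U_ε(φ)` with error parameter `ε` and phases `α`, `β`, `φ`. -/
noncomputable def Upulse (ε α β φ : ℝ) : Matrix (Fin 2) (Fin 2) ℂ :=
  !![(ε : ℂ) * Complex.exp (Complex.I * α),
     (Real.sqrt (1 - ε ^ 2) : ℂ) * Complex.exp (Complex.I * (β + φ));
     -((Real.sqrt (1 - ε ^ 2) : ℂ) * Complex.exp (-(Complex.I * (β + φ)))),
     (ε : ℂ) * Complex.exp (-(Complex.I * α))]

/-- The sequence propagator `U_ε = U_ε(φ_n) ⋯ U_ε(φ_1)`. -/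
noncomputable def Useq (n : ℕ) (ε α β : ℝ) (φ : ℕ → ℝ) : Matrix (Fin 2) (Fin 2) ℂ :=
  ((List.range n).map (fun j => Upulse ε α β (φ (n - j)))).prod

/-- `Γ = Σ_{j=1}^n (−1)^{j−1} (φ_j − φ_{j+1})`. -/
noncomputable def Gam (n : ℕ) (φ : ℕ → ℝ) : ℝ :=
  ∑ j ∈ Finset.Icc 1 n, (-1 : ℝ) ^ (j - 1) * (φ j - φ (j + 1))

/-!
At `ε = 1` every pulse is `diag(e^{iα}, e^{-iα})`, and at `ε = 0` two consecutive pulses multiply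
to minus a diagonal phase matrix, so for even `n` both `U_1` and `U_0` are diagonal unitaries with
explicit phases. Evaluating the trace polynomial at `ε = 0` gives `a_0 = 2`; at `ε = 1`, where only
`a_0` and `a_{n/2}` survive, it gives `a_0 + a_{n/2} = 2 (-1)^{n/2} cos (n α + Γ/2)`, because the
boundary conditions `φ_1 = φ_{n+1} = 0` make `-Γ/2` the phase of `U_0`. Choosing `α` with
`n α + Γ/2 = π/2` then makes `a_{n/2} = -2`.
-/

noncomputable def diagPhase (θ : ℝ) : Matrix (Fin 2) (Fin 2) ℂ :=
  !![Complex.exp (Complex.I * θ), 0; 0, Complex.exp (-(Complex.I * θ))]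

lemma diagPhase_zero : diagPhase 0 = 1 := by
  simp [diagPhase, Matrix.one_fin_two]

lemma diagPhase_mul (a b : ℝ) : diagPhase a * diagPhase b = diagPhase (a + b) := by
  simp only [diagPhase, Matrix.mul_fin_two, ← Complex.exp_add, mul_zero, zero_mul, add_zero,
    zero_add]
  push_cast
  ring_nf

lemma conjTranspose_diagPhase (θ : ℝ) : (diagPhase θ)ᴴ = diagPhase (-θ) := by
  ext i j
  fin_cases i <;> fin_cases j <;>
    simp [diagPhase, Matrix.conjTranspose_apply, ← Complex.exp_conj]

lemma trace_diagPhase (θ : ℝ) : (diagPhase θ).trace = 2 * Real.cos θ := by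
  rw [diagPhase, Matrix.trace_fin_two_of, Complex.ofReal_cos, Complex.cos]
  ring_nf

lemma trace_conjTranspose_diagPhase_mul (a b : ℝ) :
    ((diagPhase a)ᴴ * diagPhase b).trace = 2 * Real.cos (b - a) := by
  rw [conjTranspose_diagPhase, diagPhase_mul, trace_diagPhase, neg_add_eq_sub]

lemma Upulse_one (α β ψ : ℝ) : Upulse 1 α β ψ = diagPhase α := by
  simp [Upulse, diagPhase]

lemma Upulse_zero_mul_Upulse_zero (α β ψ χ : ℝ) :
    Upulse 0 α β ψ * Upulse 0 α β χ = -diagPhase (ψ - χ) := by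
  simp only [Upulse, diagPhase, Matrix.mul_fin_two]
  norm_num [← Complex.exp_add]
  constructor <;> ring_nf

lemma Useq_succ (m : ℕ) (ε α β : ℝ) (φ : ℕ → ℝ) :
    Useq (m + 1) ε α β φ = Upulse ε α β (φ (m + 1)) * Useq m ε α β φ := by
  rw [Useq, List.range_succ_eq_map, List.map_cons, List.prod_cons, List.map_map]
  simp [Useq, Function.comp_def]

lemma Useq_one (n : ℕ) (α β : ℝ) (φ : ℕ → ℝ) : Useq n 1 α β φ = diagPhase (n * α) := by
  induction n with
  | zero => simp [Useq, diagPhase_zero]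
  | succ m ih => rw [Useq_succ, ih, Upulse_one, diagPhase_mul]; push_cast; ring_nf

noncomputable def pairPhase (t : ℕ) (φ : ℕ → ℝ) : ℝ :=
  ∑ s ∈ range t, (φ (2 * s + 2) - φ (2 * s + 1))

lemma Useq_zero_two_mul (t : ℕ) (α β : ℝ) (φ : ℕ → ℝ) :
    Useq (2 * t) 0 α β φ = (-1 : ℂ) ^ t • diagPhase (pairPhase t φ) := by
  induction t with
  | zero => simp [Useq, pairPhase, diagPhase_zero]
  | succ t ih =>
    rw [show 2 * (t + 1) = 2 * t + 1 + 1 by ring, Useq_succ, Useq_succ, ← mul_assoc,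
      Upulse_zero_mul_Upulse_zero, ih, mul_smul_comm, neg_mul, diagPhase_mul, pow_succ,
      mul_neg_one, neg_smul, smul_neg, pairPhase, pairPhase, sum_range_succ, add_comm]

lemma Gam_two_mul (t : ℕ) (φ : ℕ → ℝ) :
    Gam (2 * t) φ = φ (2 * t + 1) - φ 1 - 2 * pairPhase t φ := by
  induction t with
  | zero => simp [Gam, pairPhase]
  | succ t ih =>
    rw [show 2 * (t + 1) = 2 * t + 1 + 1 by ring, Gam, sum_Icc_succ_top (by omega),
      sum_Icc_succ_top (by omega), ← Gam, ih, pairPhase, pairPhase, sum_range_succ]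
    simp only [Nat.add_sub_cancel, pow_succ, pow_mul]
    ring_nf

lemma sum_range_succ_eq_first_add_last {M : Type*} [AddCommMonoid M] {t : ℕ} (ht : 1 ≤ t)
    (c : ℕ → M)
    (hc : ∀ k, 1 ≤ k → k ≤ t - 1 → c k = 0) : ∑ k ∈ range (t + 1), c k = c 0 + c t := by
  obtain ⟨s, rfl⟩ : ∃ s, t = s + 1 := ⟨t - 1, by omega⟩
  rw [sum_range_succ, sum_range_succ', sum_eq_zero fun k hk => hc (k + 1) (by omega)
    (by simp only [mem_range] at hk; omega), zero_add]

section PerfectSequence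

variable (t : ℕ) (α β : ℝ) (φ : ℕ → ℝ)

lemma trace_conjTranspose_Useq_zero_mul_self :
    ((Useq (2 * t) 0 α β φ)ᴴ * Useq (2 * t) 0 α β φ).trace = 2 := by
  simp [Useq_zero_two_mul, trace_conjTranspose_diagPhase_mul, ← mul_assoc, ← pow_add]

lemma trace_conjTranspose_Useq_zero_mul_Useq_one :
    ((Useq (2 * t) 0 α β φ)ᴴ * Useq (2 * t) 1 α β φ).trace =
      2 * (-1 : ℂ) ^ t * Real.cos (2 * t * α - pairPhase t φ) := by
  simp only [Useq_zero_two_mul, Useq_one, conjTranspose_smul, Matrix.smul_mul, trace_smul,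
    trace_conjTranspose_diagPhase_mul, star_pow, star_neg, star_one, smul_eq_mul, Nat.cast_mul,
    Nat.cast_ofNat]
  ring

end PerfectSequence

theorem stmt2 (n : ℕ) (hn2 : 2 ≤ n) (hne : Even n)
    (φ : ℕ → ℝ) (hφ1 : φ 1 = 0) (hφn1 : φ (n + 1) = 0) (β : ℝ)
    (a : ℝ → ℕ → ℂ)
    (ha : ∀ α : ℝ, ∀ ε ∈ Set.Icc (0 : ℝ) 1,
      Matrix.trace ((Useq n 0 α β φ)ᴴ * Useq n ε α β φ) =
        ∑ k ∈ Finset.range (n / 2 + 1), a α k * (ε : ℂ) ^ (2 * k))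
    (hvan : ∀ α : ℝ, ∀ k : ℕ, 1 ≤ k → k ≤ n / 2 - 1 → a α k = 0) :
    (∀ α : ℝ, a α (n / 2) =
      2 * (-1 : ℂ) ^ (n / 2)
        * ((Real.cos ((n : ℝ) * α + Gam n φ / 2) : ℝ) : ℂ) - 2) ∧
    (∃ α : ℝ, a α (n / 2) ≠ 0) := by
  obtain ⟨t, rfl⟩ := even_iff_two_dvd.mp hne
  have ht : 1 ≤ t := by omega
  simp only [Nat.mul_div_cancel_left t two_pos] at ha hvan ⊢
  have hcoeff : ∀ α : ℝ, a α t =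
      2 * (-1 : ℂ) ^ t * ((Real.cos (((2 * t : ℕ) : ℝ) * α + Gam (2 * t) φ / 2) : ℝ) : ℂ) - 2 := by
    intro α
    have h0 : 2 = a α 0 := by
      simpa [trace_conjTranspose_Useq_zero_mul_self, sum_range_succ']
        using ha α 0 ⟨le_rfl, zero_le_one⟩
    have h1 := ha α 1 ⟨zero_le_one, le_rfl⟩
    simp only [trace_conjTranspose_Useq_zero_mul_Useq_one, Complex.ofReal_one, one_pow,
      mul_one, sum_range_succ_eq_first_add_last ht _ (hvan α)] at h1
    have hGam : Gam (2 * t) φ / 2 = -pairPhase t φ := by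
      rw [Gam_two_mul, hφ1, hφn1]
      ring
    rw [hGam, Nat.cast_mul, Nat.cast_ofNat, ← sub_eq_add_neg]
    linear_combination h0 - h1
  refine ⟨hcoeff, (Real.pi / 2 - Gam (2 * t) φ / 2) / (2 * t : ℕ), ?_⟩
  have ht0 : ((2 * t : ℕ) : ℝ) ≠ 0 := by positivity
  rw [hcoeff, mul_div_cancel₀ _ ht0, sub_add_cancel, Real.cos_pi_div_two]
  norm_num
end

section
/- Let n ≥ 4 be even and 1 ≤ k ≤ n/2. Then P̃_{n−2k} = (−1)^{n/2+k} Σ_r R(L_r(X_C)) = (−1)^{n/2+k} Σ_r R(2α S(r)) R(L_r(X_D)), where both sums run over all strictly increasing 2k-tuples r = (r_1,…,r_{2k}) with 1 ≤ r_1 < ⋯ < r_{2k} ≤ n. -/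
open Complex Matrix Finset

/-- `R(φ) = diag(e^{iφ/2}, e^{−iφ/2})`. -/
noncomputable def Rmat (θ : ℝ) : Matrix (Fin 2) (Fin 2) ℂ :=
  !![Complex.exp (Complex.I * θ / 2), 0; 0, Complex.exp (-(Complex.I * θ / 2))]

/-- The modified `Y` gate. -/
noncomputable def Ymat (α β : ℝ) : Matrix (Fin 2) (Fin 2) ℂ :=
  !![0, Complex.exp (Complex.I * (β - α));
     -Complex.exp (-(Complex.I * (β - α))), 0]

/-- Signature `S(r) = Σ_j (−1)^{j+r_j}` for a `2k`-tuple encoded as `r : Fin (2k) → Fin n`,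
with paper (1-based) values `r_j = (r j) + 1` at paper positions `j + 1`. -/
def Sig {N twok : ℕ} (r : Fin twok → Fin N) : ℤ :=
  ∑ j : Fin twok, (-1) ^ ((j : ℕ) + (r j : ℕ))

-- The sign pattern `c_j` of the alternating form `L_r`: `c_1 = 1` and, for `j ≥ 1`,
-- `c_{j+1} = c_j` if `j` is one of the (1-based) values of `r`, otherwise `c_{j+1} = −c_j`.
open Classical in
noncomputable def signPat {N twok : ℕ} (r : Fin twok → Fin N) : ℕ → ℤ
  | 0 => 1
  | 1 => 1
  | (j + 2) =>
    if ∃ i, (r i : ℕ) + 1 = j + 1 then signPat r (j + 1) else -signPat r (j + 1)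

/-- The alternating linear form `L_r(X) = Σ_{j=1}^n c_j x_j`. -/
noncomputable def Lform {twok : ℕ} (n : ℕ) {N : ℕ} (r : Fin twok → Fin N) (X : ℕ → ℝ) : ℝ :=
  ∑ j ∈ Finset.Icc 1 n, (signPat r j : ℝ) * X j

-- `P̃_{n−2k} = Σ_r B_1 B_2 ⋯ B_n` over strictly increasing `2k`-tuples `r` in `[1,n]`,
-- where `B_j = R(C_j)` if `j` is a value of `r` and `B_j = R(C_j) Y` otherwise.
open Classical in
noncomputable def Ptilde (n k : ℕ) (α β : ℝ) (C : ℕ → ℝ) : Matrix (Fin 2) (Fin 2) ℂ :=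
  ∑ r ∈ Finset.univ.filter (fun r : Fin (2 * k) → Fin n => StrictMono r),
    ((List.range n).map (fun j =>
      if ∃ i, (r i : ℕ) + 1 = j + 1 then Rmat (C (j + 1))
      else Rmat (C (j + 1)) * Ymat α β)).prod

/-!
Moving every `Y` to the right with `Y R(θ) = R(-θ) Y` turns each product `B_1 ⋯ B_n` into
`R(L_r(X_C)) Y^(n-2k)`: the angle `C_j` picks up the sign `(-1)^(number of Y's before j)`, which is
the sign pattern `c_j`, and `Y² = -1`. For the second form, `L_r(X_C) = L_r(X_D) + 2α Σ_j c_j`,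
and `Σ_j c_j = S(r)`: away from the values of `r` consecutive signs alternate, so the sum
telescopes to the terms `c_(r_i) = (-1)^(i + r_i)`, there being `r_i - i` non-values below `r_i`.
-/

lemma Rmat_add (a b : ℝ) : Rmat (a + b) = Rmat a * Rmat b := by
  ext i j
  fin_cases i <;> fin_cases j <;>
    simp [Rmat, Matrix.mul_apply, ← Complex.exp_add] <;> ring_nf

lemma Rmat_zero : Rmat 0 = 1 := by
  ext i j
  fin_cases i <;> fin_cases j <;> simp [Rmat]

lemma Ymat_mul_Rmat (α β θ : ℝ) : Ymat α β * Rmat θ = Rmat (-θ) * Ymat α β := by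
  ext i j
  fin_cases i <;> fin_cases j <;> simp [Rmat, Ymat, Matrix.mul_apply] <;> ring_nf

lemma Ymat_mul_self (α β : ℝ) : Ymat α β * Ymat α β = -1 := by
  ext i j
  fin_cases i <;> fin_cases j <;> simp [Ymat, Matrix.mul_apply, ← Complex.exp_add]

lemma Ymat_pow_mul_Rmat (α β : ℝ) (m : ℕ) (θ : ℝ) :
    Ymat α β ^ m * Rmat θ = Rmat ((-1) ^ m * θ) * Ymat α β ^ m := by
  induction m generalizing θ with
  | zero => simp
  | succ m ih =>
    rw [pow_succ, mul_assoc, Ymat_mul_Rmat, ← mul_assoc, ih, mul_assoc, ← pow_succ]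
    congr 2
    ring

lemma Ymat_pow_two_mul (α β : ℝ) (m : ℕ) : Ymat α β ^ (2 * m) = (-1 : ℂ) ^ m • 1 := by
  rw [pow_mul, sq, Ymat_mul_self, ← neg_one_smul ℂ (1 : Matrix (Fin 2) (Fin 2) ℂ), smul_pow,
    one_pow]

/-- Commuting every `Y` to the right flips the sign of each later rotation angle. -/
lemma list_prod_map_ite_Rmat (α β : ℝ) (p : ℕ → Prop) [DecidablePred p] (f : ℕ → ℝ) (n : ℕ) :
    ((List.range n).map fun j => if p j then Rmat (f j) else Rmat (f j) * Ymat α β).prod =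
      Rmat (∑ j ∈ range n, (-1) ^ #{t ∈ range j | ¬ p t} * f j) *
        Ymat α β ^ #{t ∈ range n | ¬ p t} := by
  induction n with
  | zero => simp [Rmat_zero]
  | succ n ih =>
    rw [List.range_succ, List.map_append, List.prod_append, ih, sum_range_succ, range_add_one,
      filter_insert, Rmat_add]
    by_cases hp : p n
    · simp only [hp, if_true, not_true_eq_false, if_false, List.map_cons, List.map_nil,
        List.prod_cons, List.prod_nil, mul_one]
      rw [mul_assoc, mul_assoc, Ymat_pow_mul_Rmat]
    · simp only [hp, if_false, not_false_eq_true, if_true, List.map_cons, List.map_nil,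
        List.prod_cons, List.prod_nil, mul_one]
      rw [card_insert_of_notMem (by simp), pow_succ, mul_assoc, mul_assoc,
        ← mul_assoc _ (Rmat _), Ymat_pow_mul_Rmat]
      simp only [mul_assoc]

section SignPattern

open Classical

variable {N m : ℕ} (r : Fin m → Fin N)

lemma signPat_succ (j : ℕ) :
    signPat r (j + 1) = (-1) ^ #{t ∈ range j | ¬ ∃ i, (r i : ℕ) + 1 = t + 1} := by
  induction j with
  | zero => rfl
  | succ j ih =>
    show signPat r (j + 2) = _
    rw [signPat, range_add_one, filter_insert, ih]
    split_ifs with h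
    · rfl
    · rw [card_insert_of_notMem (by simp), pow_succ, mul_neg_one]

lemma signPat_succ_succ (j : ℕ) :
    signPat r (j + 2) =
      if ∃ i, (r i : ℕ) + 1 = j + 1 then signPat r (j + 1) else -signPat r (j + 1) := by
  rw [signPat]

lemma sum_Icc_one_eq_sum_range {M : Type*} [AddCommMonoid M] (g : ℕ → M) (n : ℕ) :
    ∑ j ∈ Icc 1 n, g j = ∑ j ∈ range n, g (j + 1) := by
  rw [← Ico_add_one_right_eq_Icc, sum_Ico_eq_sum_range]
  simp [add_comm]

lemma Lform_eq_sum_range (n : ℕ) (X : ℕ → ℝ) :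
    Lform n r X =
      ∑ j ∈ range n, (-1) ^ #{t ∈ range j | ¬ ∃ i, (r i : ℕ) + 1 = t + 1} * X (j + 1) := by
  rw [Lform, sum_Icc_one_eq_sum_range]
  simp [signPat_succ]

lemma Lform_add_const (n : ℕ) (X : ℕ → ℝ) (c : ℝ) :
    Lform n r (fun j => X j + c) = Lform n r X + c * ∑ j ∈ Icc 1 n, (signPat r j : ℝ) := by
  rw [Lform, Lform, mul_sum, ← sum_add_distrib]
  exact sum_congr rfl fun j _ => by ring

lemma filter_range_eq_image (j : ℕ) :
    {t ∈ range j | ∃ i, (r i : ℕ) + 1 = t + 1} =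
      Finset.image (fun i => (r i : ℕ)) {i | (r i : ℕ) < j} := by
  ext t
  simp only [mem_filter, mem_range, mem_image, mem_univ, true_and, add_left_inj]
  constructor
  · rintro ⟨ht, i, rfl⟩
    exact ⟨i, ht, rfl⟩
  · rintro ⟨i, hi, rfl⟩
    exact ⟨hi, i, rfl⟩

/-- Summation by parts: off the values of `r` the sign alternates, so its sum telescopes. -/
lemma two_mul_sum_signPat (M : ℕ) :
    2 * ∑ j ∈ range M, signPat r (j + 1) =
      1 - signPat r (M + 1) +
        2 * ∑ j ∈ range M with ∃ i, (r i : ℕ) + 1 = j + 1, signPat r (j + 1) := by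
  have step : ∀ j, 2 * signPat r (j + 1) = (signPat r (j + 1) - signPat r (j + 2)) +
      2 * if ∃ i, (r i : ℕ) + 1 = j + 1 then signPat r (j + 1) else 0 := by
    intro j
    rw [signPat_succ_succ]
    split_ifs <;> ring
  rw [mul_sum, sum_congr rfl fun j _ => step j, sum_add_distrib, sum_range_sub', ← mul_sum,
    sum_filter]
  rfl

variable {r}

lemma card_filter_range_not_mem (hr : Function.Injective r) (j : ℕ) :
    #{t ∈ range j | ¬ ∃ i, (r i : ℕ) + 1 = t + 1} = j - #{i | (r i : ℕ) < j} := by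
  rw [filter_not, card_sdiff_of_subset (filter_subset _ _), card_range, filter_range_eq_image,
    card_image_of_injective _ fun _ _ h => hr (Fin.val_injective h)]

lemma card_filter_val_lt_le (hr : Function.Injective r) (j : ℕ) : #{i | (r i : ℕ) < j} ≤ j := by
  rw [← card_image_of_injective _ fun _ _ h => hr (Fin.val_injective h), ← filter_range_eq_image]
  exact (card_filter_le _ _).trans (card_range j).le

lemma card_filter_val_lt_apply (hr : StrictMono r) (i : Fin m) : #{i' | (r i' : ℕ) < r i} = i := by
  simp only [Fin.val_fin_lt, hr.lt_iff_lt]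
  rw [← Fin.card_Iio]
  congr 1
  ext
  simp

lemma signPat_succ_apply (hr : StrictMono r) (i : Fin m) :
    signPat r (r i + 1) = (-1) ^ ((i : ℕ) + r i) := by
  have hle := card_filter_val_lt_le hr.injective (r i)
  rw [signPat_succ, card_filter_range_not_mem hr.injective, card_filter_val_lt_apply hr] at *
  exact neg_one_pow_congr (by grind)

lemma signPat_succ_eq_one_of_even (hr : Function.Injective r) (hN : Even N) (hm : Even m) :
    signPat r (N + 1) = 1 := by
  have htop : #{i | (r i : ℕ) < N} = m := by simp
  have hle := card_filter_val_lt_le hr N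
  rw [signPat_succ, card_filter_range_not_mem hr, htop] at *
  exact Even.neg_one_pow ((Nat.even_sub hle).2 (iff_of_true hN hm))

theorem sum_signPat_eq_Sig (hr : StrictMono r) (hN : Even N) (hm : Even m) :
    ∑ j ∈ Icc 1 N, signPat r j = Sig r := by
  have hvals : ∑ j ∈ range N with ∃ i, (r i : ℕ) + 1 = j + 1, signPat r (j + 1) = Sig r := by
    rw [filter_range_eq_image, sum_image (fun a _ b _ h => hr.injective (Fin.val_injective h)),
      filter_true_of_mem (fun i _ => (r i).isLt), Sig]
    exact sum_congr rfl fun i _ => signPat_succ_apply hr i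
  have h := two_mul_sum_signPat r N
  rw [hvals, signPat_succ_eq_one_of_even hr.injective hN hm] at h
  rw [sum_Icc_one_eq_sum_range]
  linarith

end SignPattern

open Classical in
lemma list_prod_eq_Rmat_Lform_mul (α β : ℝ) {n m : ℕ} {r : Fin m → Fin n}
    (hr : Function.Injective r) (C : ℕ → ℝ) :
    ((List.range n).map fun j =>
      if ∃ i, (r i : ℕ) + 1 = j + 1 then Rmat (C (j + 1))
      else Rmat (C (j + 1)) * Ymat α β).prod =
      Rmat (Lform n r C) * Ymat α β ^ (n - m) := by
  rw [list_prod_map_ite_Rmat, card_filter_range_not_mem hr,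
    filter_true_of_mem (fun i _ => (r i).isLt), card_univ, Fintype.card_fin, Lform_eq_sum_range]

open Classical in
lemma Ptilde_eq_smul_sum (α β : ℝ) {n : ℕ} (k : ℕ) (hn : Even n) (C : ℕ → ℝ) :
    Ptilde n k α β C = (-1 : ℂ) ^ (n / 2 + k) •
      ∑ r ∈ univ.filter (fun r : Fin (2 * k) → Fin n => StrictMono r), Rmat (Lform n r C) := by
  rw [Ptilde, smul_sum]
  refine sum_congr rfl fun r hr => ?_
  have hinj := (mem_filter.1 hr).2.injective
  have hkn : 2 * k ≤ n := by simpa using Fintype.card_le_of_injective r hinj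
  obtain ⟨h, rfl⟩ := hn
  rw [list_prod_eq_Rmat_Lform_mul α β hinj, show h + h - 2 * k = 2 * (h - k) by omega,
    Ymat_pow_two_mul, mul_smul_comm, mul_one]
  congr 1
  exact neg_one_pow_congr (by grind)

open Classical in
theorem stmt4_general (n k : ℕ) (hne : Even n)
    (α β : ℝ) (φ : ℕ → ℝ) :
    Ptilde n k α β (fun j => (φ (n - j + 1) - φ (n - j + 2)) + 2 * α) =
      ((-1 : ℂ) ^ (n / 2 + k)) •
        ∑ r ∈ Finset.univ.filter (fun r : Fin (2 * k) → Fin n => StrictMono r),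
          Rmat (Lform n r (fun j => (φ (n - j + 1) - φ (n - j + 2)) + 2 * α)) ∧
    Ptilde n k α β (fun j => (φ (n - j + 1) - φ (n - j + 2)) + 2 * α) =
      ((-1 : ℂ) ^ (n / 2 + k)) •
        ∑ r ∈ Finset.univ.filter (fun r : Fin (2 * k) → Fin n => StrictMono r),
          Rmat (2 * α * (Sig r : ℝ)) *
            Rmat (Lform n r (fun j => φ (n - j + 1) - φ (n - j + 2))) := by
  refine ⟨Ptilde_eq_smul_sum α β k hne _, ?_⟩
  rw [Ptilde_eq_smul_sum α β k hne]
  congr 1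
  refine sum_congr rfl fun r hr => ?_
  rw [← Rmat_add, Lform_add_const,
    ← sum_signPat_eq_Sig (mem_filter.1 hr).2 hne (even_two_mul k)]
  push_cast
  ring_nf

open Classical in
theorem stmt4 (n k : ℕ) (hn4 : 4 ≤ n) (hne : Even n) (hk1 : 1 ≤ k) (hk2 : k ≤ n / 2)
    (α β : ℝ) (φ : ℕ → ℝ) (hφ : φ (n + 1) = 0) :
    Ptilde n k α β (fun j => (φ (n - j + 1) - φ (n - j + 2)) + 2 * α) =
      ((-1 : ℂ) ^ (n / 2 + k)) •
        ∑ r ∈ Finset.univ.filter (fun r : Fin (2 * k) → Fin n => StrictMono r),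
          Rmat (Lform n r (fun j => (φ (n - j + 1) - φ (n - j + 2)) + 2 * α)) ∧
    Ptilde n k α β (fun j => (φ (n - j + 1) - φ (n - j + 2)) + 2 * α) =
      ((-1 : ℂ) ^ (n / 2 + k)) •
        ∑ r ∈ Finset.univ.filter (fun r : Fin (2 * k) → Fin n => StrictMono r),
          Rmat (2 * α * (Sig r : ℝ)) *
            Rmat (Lform n r (fun j => φ (n - j + 1) - φ (n - j + 2))) :=
  stmt4_general n k hne α β φ
end

section
/- Let n ≥ 4 be even, let Φ be a UR choice (Φ = ±π/m if n = 4m, Φ = ±2mπ/(2m+1) if n = 4m+2), let φ_2, α, β ∈ ℝ, and set η = 2α − φ_2 − nΦ + Φ/2. Then for every 1 ≤ k ≤ n/2, P̃_{n−2k} = (−1)^{n/2+k} Σ_r R(η S(r)) R(nφ_2 + Φ W(r)), the sum over all strictly increasing 2k-tuples r in [1,n]. -/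
open Complex Matrix Finset

/-- Weighted signature `W(r) = Σ_j (−1)^{j+r_j} r_j`. -/
def Wsig {N twok : ℕ} (r : Fin twok → Fin N) : ℤ :=
  ∑ j : Fin twok, (-1) ^ ((j : ℕ) + (r j : ℕ)) * ((r j : ℕ) + 1)

/-!
Write `R(c) Y = R(c + 2(β - α)) J` with `J = [[0, 1], [-1, 0]]`. Since `J R(θ) = R(-θ) J`
and `J² = -1`, moving every `J` to the right turns a product of gates into
`R(Σ_j ε_j x_j) J^N`, where `N` is the number of `J`'s and `ε_j = ±1` is the parity of the
number of `J`'s before gate `j`. For a strictly increasing `2k`-tuple `r`, `N = n - 2k`,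
which gives the sign `(-1)^{n/2+k}`.

The signs satisfy `ε_{j+1} = ε_j` at the positions of `r` and `ε_{j+1} = -ε_j` elsewhere,
so telescoping expresses `Σ ε_j` and `Σ j ε_j` through `S(r)` and `W(r)`, and kills the
contribution `Σ_{j ∉ r} ε_j (β - α)` of the `Y`'s. The UR phases `C_j` are affine in `j`
except for `C_1`, so the total phase is `η S(r) + nφ_2 + Φ W(r) + n(n-2)Φ/2`, and the UR
condition makes the last term a multiple of `4π`, the period of `R`.
-/

namespace Rmat

theorem add (x y : ℝ) : Rmat (x + y) = Rmat x * Rmat y := by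
  ext i j
  fin_cases i <;> fin_cases j <;>
    simp [Rmat, Matrix.mul_apply, ← Complex.exp_add] <;> ring_nf

theorem zero : Rmat 0 = 1 := by
  ext i j
  fin_cases i <;> fin_cases j <;> simp [Rmat]

theorem four_pi_mul_int (z : ℤ) : Rmat (4 * Real.pi * z) = 1 := by
  have h : Complex.I * ((4 * Real.pi * z : ℝ) : ℂ) / 2 = z * (2 * Real.pi * Complex.I) := by
    push_cast; ring
  rw [Rmat, h, ← neg_mul, ← Int.cast_neg, Complex.exp_int_mul_two_pi_mul_I,
    Complex.exp_int_mul_two_pi_mul_I, Matrix.one_fin_two]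

theorem add_four_pi_mul_int (θ : ℝ) (z : ℤ) : Rmat (θ + 4 * Real.pi * z) = Rmat θ := by
  rw [add, four_pi_mul_int, mul_one]

end Rmat

def Jmat : Matrix (Fin 2) (Fin 2) ℂ := !![0, 1; -1, 0]

theorem Jmat_mul_Jmat : Jmat * Jmat = -1 := by
  ext i j
  fin_cases i <;> fin_cases j <;> simp [Jmat, Matrix.mul_apply]

theorem Jmat_mul_Rmat (θ : ℝ) : Jmat * Rmat θ = Rmat (-θ) * Jmat := by
  ext i j
  fin_cases i <;> fin_cases j <;> simp [Jmat, Rmat, Matrix.mul_apply] <;> ring_nf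

theorem Jmat_pow_mul_Rmat (m : ℕ) (θ : ℝ) :
    Jmat ^ m * Rmat θ = Rmat ((-1) ^ m * θ) * Jmat ^ m := by
  induction m generalizing θ with
  | zero => simp
  | succ m ih =>
    rw [pow_succ, mul_assoc, Jmat_mul_Rmat, ← mul_assoc, ih, pow_succ, mul_assoc]
    ring_nf

theorem Jmat_pow_two_mul (m : ℕ) : Jmat ^ (2 * m) = (-1 : ℂ) ^ m • 1 := by
  rw [pow_mul, sq, Jmat_mul_Jmat, ← neg_one_smul ℂ (1 : Matrix (Fin 2) (Fin 2) ℂ), smul_pow,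
    one_pow]

theorem Ymat_eq_Rmat_mul_Jmat (α β : ℝ) : Ymat α β = Rmat (2 * (β - α)) * Jmat := by
  ext i j
  fin_cases i <;> fin_cases j <;> simp [Jmat, Rmat, Ymat, Matrix.mul_apply] <;> ring_nf

theorem Nat.count_not (p : ℕ → Prop) [DecidablePred p] (n : ℕ) :
    Nat.count (fun j => ¬ p j) n = n - Nat.count p n := by
  simp only [Nat.count_eq_card_filter_range, Finset.filter_not,
    card_sdiff_of_subset (filter_subset _ _), card_range]

-- The sign `ε_j` of the header, where the gates carrying a `J` are those outside `s`.
def flipSign (s : Finset ℕ) (j : ℕ) : ℝ := (-1) ^ Nat.count (· ∉ s) j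

section flipSign

variable (s : Finset ℕ)

theorem flipSign_zero : flipSign s 0 = 1 := by simp [flipSign]

theorem flipSign_succ (j : ℕ) :
    flipSign s (j + 1) = if j ∈ s then flipSign s j else -flipSign s j := by
  unfold flipSign
  rw [Nat.count_succ]
  split_ifs <;> simp [pow_succ]

theorem sum_filter_notMem_flipSign (n : ℕ) :
    ∑ j ∈ range n with j ∉ s, flipSign s j = (1 - flipSign s n) / 2 := by
  induction n with
  | zero => simp [flipSign_zero]
  | succ n ih =>
    rw [sum_filter, sum_range_succ, ← sum_filter, ih, flipSign_succ]
    split_ifs <;> ring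

theorem sum_range_flipSign (n : ℕ) :
    ∑ j ∈ range n, flipSign s j =
      ∑ j ∈ range n with j ∈ s, flipSign s j + (1 - flipSign s n) / 2 := by
  rw [← sum_filter_add_sum_filter_not (range n) (· ∈ s), sum_filter_notMem_flipSign]

theorem two_mul_sum_range_mul_flipSign (n : ℕ) :
    2 * ∑ j ∈ range n, j * flipSign s j + n * flipSign s n =
      ∑ j ∈ range n with j ∈ s, (2 * j + 1) * flipSign s j -
        ∑ j ∈ range n with j ∉ s, flipSign s j := by
  induction n with
  | zero => simp
  | succ n ih =>
    simp only [sum_filter, sum_range_succ] at ih ⊢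
    rw [flipSign_succ]
    split_ifs <;> push_cast <;> linarith

end flipSign

theorem prod_range_Rmat_mul_Jmat (s : Finset ℕ) (x : ℕ → ℝ) (n : ℕ) :
    ((List.range n).map fun j => if j ∈ s then Rmat (x j) else Rmat (x j) * Jmat).prod =
      Rmat (∑ j ∈ range n, flipSign s j * x j) * Jmat ^ Nat.count (· ∉ s) n := by
  induction n with
  | zero => simp [Rmat.zero]
  | succ n ih =>
    rw [List.range_succ, List.map_append, List.prod_append, ih, sum_range_succ, Rmat.add,
      Nat.count_succ]
    by_cases h : n ∈ s
    · simp [h, mul_assoc, Jmat_pow_mul_Rmat, flipSign]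
    · simp [h, mul_assoc, ← mul_assoc (Jmat ^ _), Jmat_pow_mul_Rmat, flipSign, pow_succ]

def tupleValues {m n : ℕ} (r : Fin m → Fin n) : Finset ℕ := univ.image fun t => (r t : ℕ)

section tupleValues

variable {m n : ℕ} {r : Fin m → Fin n}

theorem filter_range_mem_tupleValues : {j ∈ range n | j ∈ tupleValues r} = tupleValues r := by
  rw [filter_mem_eq_inter, inter_eq_right]
  intro j hj
  obtain ⟨t, -, rfl⟩ := mem_image.mp hj
  exact mem_range.mpr (r t).isLt

theorem val_comp_injective (hr : Function.Injective r) : Function.Injective fun t => (r t : ℕ) :=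
  Fin.val_injective.comp hr

theorem sum_tupleValues (hr : Function.Injective r) (f : ℕ → ℝ) :
    ∑ j ∈ tupleValues r, f j = ∑ t, f (r t) :=
  sum_image fun _ _ _ _ h => val_comp_injective hr h

theorem count_mem_tupleValues (hr : Function.Injective r) :
    Nat.count (· ∈ tupleValues r) n = m := by
  rw [Nat.count_eq_card_filter_range, filter_range_mem_tupleValues, tupleValues,
    card_image_of_injective _ (val_comp_injective hr), card_univ, Fintype.card_fin]

theorem count_mem_tupleValues_apply (hr : StrictMono r) (t : Fin m) :
    Nat.count (· ∈ tupleValues r) (r t) = t := by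
  have h : {j ∈ range (r t) | j ∈ tupleValues r} = (Iio t).image fun t => (r t : ℕ) := by
    ext j
    simp only [tupleValues, mem_filter, mem_range, mem_image, mem_univ, true_and, mem_Iio]
    constructor
    · rintro ⟨hj, t', rfl⟩
      exact ⟨t', hr.lt_iff_lt.mp hj, rfl⟩
    · rintro ⟨t', ht', rfl⟩
      exact ⟨hr ht', t', rfl⟩
  rw [Nat.count_eq_card_filter_range, h,
    card_image_of_injective _ (val_comp_injective hr.injective), Fin.card_Iio]

theorem flipSign_tupleValues_apply (hr : StrictMono r) (t : Fin m) :
    flipSign (tupleValues r) (r t) = (-1) ^ ((t : ℕ) + r t) := by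
  have hcount := count_mem_tupleValues_apply hr t
  obtain ⟨d, hd⟩ : ∃ d, (r t : ℕ) = t + d :=
    ⟨_, (Nat.add_sub_of_le (hcount ▸ Nat.count_le _)).symm⟩
  rw [flipSign, Nat.count_not, hcount, hd, Nat.add_sub_cancel_left, ← add_assoc, ← two_mul,
    pow_add, pow_mul]
  norm_num

theorem flipSign_tupleValues_last (hr : Function.Injective r) (hnm : Even (n - m)) :
    flipSign (tupleValues r) n = 1 := by
  rw [flipSign, Nat.count_not, count_mem_tupleValues hr, hnm.neg_one_pow]

theorem sum_filter_notMem_tupleValues_flipSign (hr : Function.Injective r)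
    (hnm : Even (n - m)) :
    ∑ j ∈ range n with j ∉ tupleValues r, flipSign (tupleValues r) j = 0 := by
  rw [sum_filter_notMem_flipSign, flipSign_tupleValues_last hr hnm, sub_self, zero_div]

theorem sum_range_flipSign_tupleValues (hr : StrictMono r) (hnm : Even (n - m)) :
    ∑ j ∈ range n, flipSign (tupleValues r) j = Sig r := by
  rw [sum_range_flipSign, filter_range_mem_tupleValues, sum_tupleValues hr.injective,
    flipSign_tupleValues_last hr.injective hnm, Sig]
  simp [flipSign_tupleValues_apply hr]

theorem two_mul_sum_range_mul_flipSign_tupleValues (hr : StrictMono r) (hnm : Even (n - m)) :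
    2 * ∑ j ∈ range n, j * flipSign (tupleValues r) j + n = 2 * Wsig r - Sig r := by
  have h := two_mul_sum_range_mul_flipSign (tupleValues r) n
  rw [filter_range_mem_tupleValues, sum_tupleValues hr.injective,
    sum_filter_notMem_tupleValues_flipSign hr.injective hnm,
    flipSign_tupleValues_last hr.injective hnm] at h
  rw [mul_one, sub_zero] at h
  rw [h, Wsig, Sig]
  push_cast
  rw [mul_sum, ← sum_sub_distrib]
  refine sum_congr rfl fun t _ => ?_
  rw [flipSign_tupleValues_apply hr]
  ring

end tupleValues

theorem exists_int_mul_four_pi_of_UR {n : ℕ} {Φ : ℝ}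
    (hUR : (∃ m : ℕ, n = 4 * m ∧ (Φ = Real.pi / m ∨ Φ = -(Real.pi / m))) ∨
           (∃ m : ℕ, n = 4 * m + 2 ∧
             (Φ = 2 * m * Real.pi / (2 * m + 1) ∨ Φ = -(2 * m * Real.pi / (2 * m + 1))))) :
    ∃ z : ℤ, (n : ℝ) * (n - 2) * Φ / 2 = 4 * Real.pi * z := by
  rcases hUR with ⟨m, rfl, hΦ | hΦ⟩ | ⟨m, rfl, hΦ | hΦ⟩
  · obtain rfl | hm := Nat.eq_zero_or_pos m
    · exact ⟨0, by simp⟩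
    · exact ⟨2 * m - 1, by rw [hΦ]; field_simp; push_cast; ring⟩
  · obtain rfl | hm := Nat.eq_zero_or_pos m
    · exact ⟨0, by simp⟩
    · exact ⟨1 - 2 * m, by rw [hΦ]; field_simp; push_cast; ring⟩
  · exact ⟨2 * m ^ 2, by rw [hΦ]; field_simp; push_cast; ring⟩
  · exact ⟨-(2 * m ^ 2), by rw [hΦ]; field_simp; push_cast; ring⟩

theorem UR_phase_sub_succ {n : ℕ} {φ2 Φ : ℝ} {φ : ℕ → ℝ} (hφ1 : φ 1 = 0)
    (hφn1 : φ (n + 1) = 0)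
    (hφ : ∀ j : ℕ, 2 ≤ j → j ≤ n →
      φ j = ((j : ℝ) - 1) * φ2 + ((j : ℝ) - 1) * ((j : ℝ) - 2) / 2 * Φ)
    {i : ℕ} (hi1 : 1 ≤ i) (hin : i ≤ n) :
    φ i - φ (i + 1) =
      -φ2 - ((i : ℝ) - 1) * Φ +
        if i = n then n * φ2 + n * ((n : ℝ) - 1) / 2 * Φ else 0 := by
  have hφ' : ∀ j, 1 ≤ j → j ≤ n →
      φ j = ((j : ℝ) - 1) * φ2 + ((j : ℝ) - 1) * ((j : ℝ) - 2) / 2 * Φ := by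
    intro j hj1 hjn
    rcases hj1.eq_or_lt with rfl | hj2
    · simp [hφ1]
    · exact hφ j hj2 hjn
  split_ifs with h
  · subst h
    rw [hφn1, hφ' i hi1 le_rfl]
    ring
  · rw [hφ' i hi1 hin, hφ (i + 1) (by omega) (by omega)]
    push_cast
    ring

theorem even_sub_of_injective {m n : ℕ} {r : Fin m → Fin n} (hr : Function.Injective r)
    (hn : Even n) (hm : Even m) : Even (n - m) :=
  (Nat.even_sub (Fin.le_of_injective r hr)).mpr (iff_of_true hn hm)

theorem prod_gates_tupleValues {n k : ℕ} (hne : Even n) {r : Fin (2 * k) → Fin n}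
    (hr : Function.Injective r) (x : ℕ → ℝ) :
    ((List.range n).map fun j =>
        if j ∈ tupleValues r then Rmat (x j) else Rmat (x j) * Jmat).prod =
      (-1 : ℂ) ^ (n / 2 + k) • Rmat (∑ j ∈ range n, flipSign (tupleValues r) j * x j) := by
  have h2k : 2 * k ≤ n := Fin.le_of_injective r hr
  have hcount : Nat.count (· ∉ tupleValues r) n = 2 * ((n - 2 * k) / 2) := by
    rw [Nat.count_not, count_mem_tupleValues hr]
    obtain ⟨m, rfl⟩ := hne
    omega
  have hsign : (-1 : ℂ) ^ ((n - 2 * k) / 2) = (-1) ^ (n / 2 + k) := by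
    rw [show n / 2 + k = (n - 2 * k) / 2 + 2 * k by omega, pow_add, pow_mul]
    norm_num
  rw [prod_range_Rmat_mul_Jmat, hcount, Jmat_pow_two_mul, mul_smul_comm, mul_one, hsign]

theorem sum_flipSign_mul_UR_phase {n k : ℕ} (hne : Even n) {Φ φ2 α β : ℝ} {φ : ℕ → ℝ}
    (hφ1 : φ 1 = 0) (hφn1 : φ (n + 1) = 0)
    (hφ : ∀ j : ℕ, 2 ≤ j → j ≤ n →
      φ j = ((j : ℝ) - 1) * φ2 + ((j : ℝ) - 1) * ((j : ℝ) - 2) / 2 * Φ)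
    {r : Fin (2 * k) → Fin n} (hr : StrictMono r) :
    ∑ j ∈ range n, flipSign (tupleValues r) j *
        ((φ (n - (j + 1) + 1) - φ (n - (j + 1) + 2) + 2 * α) +
          if j ∈ tupleValues r then 0 else 2 * (β - α)) =
      (2 * α - φ2 - n * Φ + Φ / 2) * Sig r + (n * φ2 + Φ * Wsig r) +
        n * (n - 2) * Φ / 2 := by
  set s := tupleValues r
  set K : ℝ := n * φ2 + n * ((n : ℝ) - 1) / 2 * Φ
  have hnm : Even (n - 2 * k) := even_sub_of_injective hr.injective hne (even_two_mul k)
  have hterm : ∀ j ∈ range n, flipSign s j *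
      ((φ (n - (j + 1) + 1) - φ (n - (j + 1) + 2) + 2 * α) +
        if j ∈ s then 0 else 2 * (β - α)) =
      (2 * α - φ2 - (n - 1) * Φ) * flipSign s j + Φ * (j * flipSign s j) +
        (if 0 = j then K else 0) + 2 * (β - α) * (if j ∉ s then flipSign s j else 0) := by
    intro j hj
    have hjn := mem_range.mp hj
    rw [show n - (j + 1) + 1 = n - j by omega, show n - (j + 1) + 2 = n - j + 1 by omega,
      UR_phase_sub_succ hφ1 hφn1 hφ (by omega) (by omega), Nat.cast_sub hjn.le]
    rcases Nat.eq_zero_or_pos j with rfl | hj0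
    · simp only [flipSign_zero, Nat.sub_zero, Nat.cast_zero]
      split_ifs <;> ring
    · simp only [show n - j ≠ n by omega, show 0 ≠ j by omega, if_false]
      split_ifs <;> ring
  have hK : (if 0 ∈ range n then K else 0) = K := by
    split_ifs with h
    · rfl
    · simp [K, show n = 0 by simpa using h]
  rw [sum_congr rfl hterm]
  simp only [sum_add_distrib, ← mul_sum, sum_ite_eq, hK, ← sum_filter]
  rw [sum_range_flipSign_tupleValues hr hnm,
    sum_filter_notMem_tupleValues_flipSign hr.injective hnm]
  linear_combination (Φ / 2) * two_mul_sum_range_mul_flipSign_tupleValues hr hnm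

theorem ite_Rmat_Ymat (p : Prop) [Decidable p] (c α β : ℝ) :
    (if p then Rmat c else Rmat c * Ymat α β) =
      let x := c + if p then 0 else 2 * (β - α)
      if p then Rmat x else Rmat x * Jmat := by
  split_ifs <;> simp [Ymat_eq_Rmat_mul_Jmat, Rmat.add, mul_assoc]

theorem exists_add_one_eq_iff_mem_tupleValues {m n : ℕ} (r : Fin m → Fin n) (j : ℕ) :
    (∃ i, (r i : ℕ) + 1 = j + 1) ↔ j ∈ tupleValues r := by
  simp [tupleValues]

open Classical in
theorem stmt7_general (n k : ℕ) (hne : Even n)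
    (Φ φ2 α β : ℝ)
    (hUR : (∃ m : ℕ, n = 4 * m ∧ (Φ = Real.pi / m ∨ Φ = -(Real.pi / m))) ∨
           (∃ m : ℕ, n = 4 * m + 2 ∧
             (Φ = 2 * m * Real.pi / (2 * m + 1) ∨ Φ = -(2 * m * Real.pi / (2 * m + 1)))))
    (φ : ℕ → ℝ) (hφ1 : φ 1 = 0) (hφn1 : φ (n + 1) = 0)
    (hφ : ∀ j : ℕ, 2 ≤ j → j ≤ n →
      φ j = ((j : ℝ) - 1) * φ2 + ((j : ℝ) - 1) * ((j : ℝ) - 2) / 2 * Φ) :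
    Ptilde n k α β (fun j => (φ (n - j + 1) - φ (n - j + 2)) + 2 * α) =
      ((-1 : ℂ) ^ (n / 2 + k)) •
        ∑ r ∈ Finset.univ.filter (fun r : Fin (2 * k) → Fin n => StrictMono r),
          Rmat ((2 * α - φ2 - (n : ℝ) * Φ + Φ / 2) * (Sig r : ℝ)) *
            Rmat ((n : ℝ) * φ2 + Φ * (Wsig r : ℝ)) := by
  obtain ⟨z, hz⟩ := exists_int_mul_four_pi_of_UR hUR
  rw [Ptilde, smul_sum]
  refine sum_congr rfl fun r hr => ?_
  replace hr := (mem_filter.mp hr).2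
  simp only [exists_add_one_eq_iff_mem_tupleValues, ite_Rmat_Ymat]
  rw [prod_gates_tupleValues hne hr.injective, sum_flipSign_mul_UR_phase hne hφ1 hφn1 hφ hr, hz,
    Rmat.add_four_pi_mul_int, Rmat.add]

open Classical in
theorem stmt7 (n k : ℕ) (hn4 : 4 ≤ n) (hne : Even n) (hk1 : 1 ≤ k) (hk2 : k ≤ n / 2)
    (Φ φ2 α β : ℝ)
    (hUR : (∃ m : ℕ, n = 4 * m ∧ (Φ = Real.pi / m ∨ Φ = -(Real.pi / m))) ∨
           (∃ m : ℕ, n = 4 * m + 2 ∧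
             (Φ = 2 * m * Real.pi / (2 * m + 1) ∨ Φ = -(2 * m * Real.pi / (2 * m + 1)))))
    (φ : ℕ → ℝ) (hφ1 : φ 1 = 0) (hφn1 : φ (n + 1) = 0)
    (hφ : ∀ j : ℕ, 2 ≤ j → j ≤ n →
      φ j = ((j : ℝ) - 1) * φ2 + ((j : ℝ) - 1) * ((j : ℝ) - 2) / 2 * Φ) :
    Ptilde n k α β (fun j => (φ (n - j + 1) - φ (n - j + 2)) + 2 * α) =
      ((-1 : ℂ) ^ (n / 2 + k)) •
        ∑ r ∈ Finset.univ.filter (fun r : Fin (2 * k) → Fin n => StrictMono r),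
          Rmat ((2 * α - φ2 - (n : ℝ) * Φ + Φ / 2) * (Sig r : ℝ)) *
            Rmat ((n : ℝ) * φ2 + Φ * (Wsig r : ℝ)) :=
  stmt7_general n k hne Φ φ2 α β hUR φ hφ1 hφn1 hφ
end

section
/- Let n ≥ 4 be even, let Φ be a UR choice (Φ = ±π/m if n = 4m, Φ = ±2mπ/(2m+1) if n = 4m+2), and let ω = e^{iΦ/2}. Then for every 1 ≤ k < n/2 and every even integer s with 0 < |s| < n, A_s^{(k)} = −(A_{−s}^{(k)})^*, where * denotes complex conjugation. -/
open Complex Finset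

-- `A_s^{(k)} = Σ_{r : S(r) = s} ω^{W(r)}`, the sum over all strictly increasing
-- `2k`-tuples `r` in `[1,n]` with signature `s`.
open Classical in
noncomputable def Aamp (n k : ℕ) (ω : ℂ) (s : ℤ) : ℂ :=
  ∑ r ∈ Finset.univ.filter
      (fun r : Fin (2 * k) → Fin n => StrictMono r ∧ Sig r = s),
    ω ^ Wsig r

/-!
Split each amplitude according to whether the tuple contains the largest value `n` or the
smallest value `1`. Shifting all entries up by one maps the tuples avoiding `n` onto those
avoiding `1`, negating `S` and sending `W` to `-W - S`; the reflection `x ↦ n + 1 - x`, with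
the order of the entries reversed, maps the tuples containing `1` onto those containing `n`,
fixing `S` and sending `W` to `(n + 1) S - W`. When `ω ^ n = 1` this gives
`A_s(ω) - ω^(-s) A_{-s}(ω⁻¹) = Y_s(ω) - Y_{-s}(ω)`, where `Y` is the part over tuples
containing `n`. Reflecting the entries below `n` by `x ↦ n - x` (again reversing their order)
while keeping `n` fixes `S` and changes `W` into `-W` modulo `n`, so `Y(ω⁻¹) = Y(ω)`; adding
the identity for `(ω⁻¹, -s)` then yields `(1 - ω^(-s)) (A_s(ω) + A_{-s}(ω⁻¹)) = 0`.
For a UR choice of `Φ`, `ω²` is a primitive `n/2`-th root of unity, so `ω ^ s ≠ 1` for even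
`0 < |s| < n`, and `|ω| = 1` turns `A_{-s}(ω⁻¹)` into the conjugate of `A_{-s}(ω)`.
-/

variable {n K k : ℕ}

lemma neg_one_pow_eq_of_mod_two_eq {a b : ℕ} (h : a % 2 = b % 2) : (-1 : ℤ) ^ a = (-1) ^ b :=
  neg_one_pow_congr (by simp only [Nat.even_iff, h])

lemma zpow_eq_zpow_of_dvd_sub {μ : ℂ} (hμ : μ ≠ 0) (hμn : μ ^ n = 1) {a b : ℤ}
    (h : (n : ℤ) ∣ a - b) : μ ^ a = μ ^ b := by
  obtain ⟨c, hc⟩ := h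
  rw [show a = b + n * c by omega, zpow_add₀ hμ, zpow_mul, zpow_natCast, hμn, one_zpow, mul_one]

lemma val_finRotate_of_lt {x : Fin n} (h : (x : ℕ) + 1 < n) : (finRotate n x : ℕ) = x + 1 := by
  rw [finRotate_apply]
  exact Fin.val_add_one_of_lt' h

lemma sig_finRotate_comp {r : Fin K → Fin n} (h : ∀ j, (r j : ℕ) + 1 < n) :
    Sig (fun j => finRotate n (r j)) = -Sig r := by
  simp only [Sig, ← sum_neg_distrib, val_finRotate_of_lt (h _), ← add_assoc, pow_succ,
    mul_neg_one]

lemma wsig_finRotate_comp {r : Fin K → Fin n} (h : ∀ j, (r j : ℕ) + 1 < n) :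
    Wsig (fun j => finRotate n (r j)) = -Wsig r - Sig r := by
  simp only [Wsig, Sig, ← sum_neg_distrib, ← sum_sub_distrib, val_finRotate_of_lt (h _)]
  refine sum_congr rfl fun j _ => ?_
  push_cast
  ring

lemma sig_rev_comp_rev (h : Even (n + K)) (r : Fin K → Fin n) :
    Sig (fun j => (r j.rev).rev) = Sig r := by
  refine (Fintype.sum_equiv Fin.revPerm _ _ fun j => ?_).symm
  simp only [Fin.revPerm_apply, Fin.rev_rev, Fin.val_rev]
  refine neg_one_pow_eq_of_mod_two_eq ?_
  have := j.isLt
  have := (r j).isLt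
  rw [Nat.even_iff] at h
  omega

lemma wsig_rev_comp_rev (h : Even (n + K)) (r : Fin K → Fin n) :
    Wsig (fun j => (r j.rev).rev) = (n + 1) * Sig r - Wsig r := by
  rw [Sig, Wsig, Wsig, mul_sum, ← sum_sub_distrib]
  refine (Fintype.sum_equiv Fin.revPerm _ _ fun j => ?_).symm
  simp only [Fin.revPerm_apply, Fin.rev_rev, Fin.val_rev]
  have := j.isLt
  have := (r j).isLt
  rw [Nat.even_iff] at h
  rw [neg_one_pow_eq_of_mod_two_eq (a := K - (j + 1) + (n - (r j + 1))) (b := j + r j) (by omega),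
    show ((n - (r j + 1) : ℕ) : ℤ) = n - (r j + 1) by omega]
  ring

def Fin.revInit {m : ℕ} (x : Fin m) : Fin m :=
  if h : (x : ℕ) + 1 < m then ⟨m - 2 - x, by omega⟩ else x

namespace Fin

variable {m : ℕ}

lemma val_revInit_of_lt {x : Fin m} (h : (x : ℕ) + 1 < m) : (revInit x : ℕ) = m - 2 - x := by
  simp [revInit, h]

lemma revInit_of_not_lt {x : Fin m} (h : ¬ (x : ℕ) + 1 < m) : revInit x = x := by
  simp [revInit, h]

lemma revInit_involutive : Function.Involutive (@revInit m) := by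
  intro x
  by_cases h : (x : ℕ) + 1 < m
  · have h' : (revInit x : ℕ) + 1 < m := by rw [val_revInit_of_lt h]; omega
    ext
    rw [val_revInit_of_lt h', val_revInit_of_lt h]
    omega
  · rw [revInit_of_not_lt h, revInit_of_not_lt h]

lemma val_revInit_mod_two (hm : Even m) (x : Fin m) : (revInit x : ℕ) % 2 = x % 2 := by
  rw [Nat.even_iff] at hm
  by_cases h : (x : ℕ) + 1 < m
  · rw [val_revInit_of_lt h]
    omega
  · rw [revInit_of_not_lt h]

lemma dvd_val_revInit_add (x : Fin m) :
    (m : ℤ) ∣ ((revInit x : ℕ) + 1) + ((x : ℕ) + 1) := by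
  by_cases h : (x : ℕ) + 1 < m
  · rw [val_revInit_of_lt h]
    exact ⟨1, by omega⟩
  · rw [revInit_of_not_lt h]
    exact ⟨2, by omega⟩

def revInitPerm (m : ℕ) : Equiv.Perm (Fin m) := revInit_involutive.toPerm _

end Fin

lemma sig_revInit_comp_revInit (hn : Even n) (hK : Even K) (r : Fin K → Fin n) :
    Sig (fun j => (r j.revInit).revInit) = Sig r := by
  refine (Fintype.sum_equiv (Fin.revInitPerm K) _ _ fun j => ?_).symm
  simp only [Fin.revInitPerm, Function.Involutive.coe_toPerm, Fin.revInit_involutive j]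
  refine neg_one_pow_eq_of_mod_two_eq ?_
  have := Fin.val_revInit_mod_two hK j
  have := Fin.val_revInit_mod_two hn (r j)
  omega

lemma dvd_wsig_revInit_comp_revInit_add (hn : Even n) (hK : Even K) (r : Fin K → Fin n) :
    (n : ℤ) ∣ Wsig (fun j => (r j.revInit).revInit) + Wsig r := by
  have hreindex : Wsig (fun j => (r j.revInit).revInit) =
      ∑ j, (-1 : ℤ) ^ ((j.revInit : ℕ) + ((r j).revInit : ℕ)) *
        (((r j).revInit : ℕ) + 1) := by
    refine Fintype.sum_equiv (Fin.revInitPerm K) _ _ fun j => ?_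
    simp only [Fin.revInitPerm, Function.Involutive.coe_toPerm, Fin.revInit_involutive j]
  rw [hreindex, Wsig, ← sum_add_distrib]
  refine dvd_sum fun j _ => ?_
  have := Fin.val_revInit_mod_two hK j
  have := Fin.val_revInit_mod_two hn (r j)
  rw [neg_one_pow_eq_of_mod_two_eq (b := (j : ℕ) + r j) (by omega), ← mul_add]
  exact (Fin.dvd_val_revInit_add (r j)).mul_left _

-- Values are `0`-based: `Hits (n - 1)` and `Hits 0` say that the paper's values `n`, `1` occur.
def Hits (v : ℕ) (r : Fin K → Fin n) : Prop := ∃ j, (r j : ℕ) = v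

lemma not_hits_sub_one_iff {r : Fin K → Fin n} :
    ¬ Hits (n - 1) r ↔ ∀ j, (r j : ℕ) + 1 < n := by
  simp only [Hits, not_exists]
  exact forall_congr' fun j => by have := (r j).isLt; omega

lemma StrictMono.revInit_comp_revInit {r : Fin K → Fin n} (hr : StrictMono r)
    (htop : Hits (n - 1) r) : StrictMono (fun j : Fin K => (r j.revInit).revInit) := by
  obtain ⟨i, hi⟩ := htop
  have hbelow : ∀ j, (r j : ℕ) + 1 < n ↔ (j : ℕ) + 1 < K := fun j => by
    constructor
    · intro hj
      by_contra hjK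
      have : r i ≤ r j := hr.monotone (Fin.le_def.2 (by omega))
      rw [Fin.le_def] at this
      omega
    · intro hjK
      have : r j < r ⟨K - 1, by omega⟩ := hr (Fin.lt_def.2 (by simp only; omega))
      rw [Fin.lt_def] at this
      omega
  intro a b hab
  rw [Fin.lt_def] at hab ⊢
  dsimp only
  have ha : (a : ℕ) + 1 < K := by omega
  have ha' := (hbelow _).2 (by rw [Fin.val_revInit_of_lt ha]; omega)
  by_cases hb : (b : ℕ) + 1 < K
  · have hb' := (hbelow _).2 (by rw [Fin.val_revInit_of_lt hb]; omega)
    have : r b.revInit < r a.revInit :=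
      hr (Fin.lt_def.2 (by rw [Fin.val_revInit_of_lt ha, Fin.val_revInit_of_lt hb]; omega))
    rw [Fin.lt_def] at this
    rw [Fin.val_revInit_of_lt ha', Fin.val_revInit_of_lt hb']
    omega
  · have hb' := mt (hbelow b).1 hb
    have := (r b).isLt
    rw [Fin.revInit_of_not_lt hb, Fin.revInit_of_not_lt hb', Fin.val_revInit_of_lt ha']
    omega

open Classical in
noncomputable def AampOn (n k : ℕ) (μ : ℂ) (s : ℤ)
    (P : (Fin (2 * k) → Fin n) → Prop) : ℂ :=
  ∑ r ∈ univ.filter (fun r : Fin (2 * k) → Fin n => (StrictMono r ∧ Sig r = s) ∧ P r),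
    μ ^ Wsig r

lemma aamp_eq_aampOn_add (μ : ℂ) (s : ℤ) (P : (Fin (2 * k) → Fin n) → Prop) :
    Aamp n k μ s = AampOn n k μ s P + AampOn n k μ s (fun r => ¬ P r) := by
  classical
  have := sum_filter_add_sum_filter_not (univ.filter fun r => StrictMono r ∧ Sig r = s) P
    (fun r => μ ^ Wsig r)
  rw [filter_filter, filter_filter] at this
  rw [Aamp, AampOn, AampOn]
  convert this.symm

lemma aampOn_eq_of_equiv {μ ν c : ℂ} {s t : ℤ} {P Q : (Fin (2 * k) → Fin n) → Prop}
    (e : (Fin (2 * k) → Fin n) ≃ (Fin (2 * k) → Fin n))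
    (hto : ∀ r, StrictMono r → P r → StrictMono (e r) ∧ Q (e r))
    (hfrom : ∀ r, StrictMono r → Q r → StrictMono (e.symm r) ∧ P (e.symm r))
    (hsig : ∀ r, StrictMono r → P r → (Sig (e r) = t ↔ Sig r = s))
    (hw : ∀ r, StrictMono r → P r → Sig r = s → μ ^ Wsig r = c * ν ^ Wsig (e r)) :
    AampOn n k μ s P = c * AampOn n k ν t Q := by
  rw [AampOn, AampOn, mul_sum]
  refine sum_equiv e (fun r => ?_) (fun r hr => ?_)
  · simp only [mem_filter, mem_univ, true_and]
    constructor
    · rintro ⟨⟨hr, hs⟩, hP⟩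
      obtain ⟨hr', hQ⟩ := hto r hr hP
      exact ⟨⟨hr', (hsig r hr hP).2 hs⟩, hQ⟩
    · rintro ⟨⟨hr', ht⟩, hQ⟩
      obtain ⟨hr, hP⟩ := e.symm_apply_apply r ▸ hfrom (e r) hr' hQ
      exact ⟨⟨hr, (hsig r hr hP).1 ht⟩, hP⟩
  · simp only [mem_filter, mem_univ, true_and] at hr
    exact hw r hr.1.1 hr.2 hr.1.2

lemma aampOn_not_hits_top [NeZero n] {μ : ℂ} (hμ : μ ≠ 0) (s : ℤ) :
    AampOn n k μ s (fun r => ¬ Hits (n - 1) r) =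
      μ ^ (-s) * AampOn n k μ⁻¹ (-s) (fun r => ¬ Hits 0 r) := by
  have hup : ∀ r : Fin (2 * k) → Fin n,
      Equiv.piCongrRight (fun _ => finRotate n) r = fun j => finRotate n (r j) := fun r => rfl
  refine aampOn_eq_of_equiv (Equiv.piCongrRight fun _ => finRotate n) (fun r hr htop => ?_)
    (fun r hr hbot => ?_) (fun r _ htop => ?_) (fun r _ htop hs => ?_)
  · rw [not_hits_sub_one_iff] at htop
    rw [hup]
    refine ⟨fun a b hab => ?_, fun ⟨j, hj⟩ => ?_⟩
    · have := hr hab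
      rw [Fin.lt_def] at this ⊢
      rw [val_finRotate_of_lt (htop a), val_finRotate_of_lt (htop b)]
      omega
    · rw [val_finRotate_of_lt (htop j)] at hj
      omega
  · have hpos : ∀ j, (r j : ℕ) ≠ 0 := fun j h => hbot ⟨j, h⟩
    have hval : ∀ j, ((Equiv.piCongrRight fun _ => finRotate n).symm r j : ℕ) = r j - 1 :=
      fun j => coe_finRotate_symm_of_ne_zero (fun h => hpos j (by simp [h]))
    refine ⟨fun a b hab => ?_, fun ⟨j, hj⟩ => ?_⟩
    · have := hr hab
      rw [Fin.lt_def] at this ⊢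
      rw [hval, hval]
      have := hpos a
      omega
    · rw [hval] at hj
      have := (r j).isLt
      have := hpos j
      omega
  · rw [not_hits_sub_one_iff] at htop
    rw [hup, sig_finRotate_comp htop, neg_inj]
  · rw [not_hits_sub_one_iff] at htop
    rw [hup, wsig_finRotate_comp htop, hs, inv_zpow', ← zpow_add₀ hμ]
    ring_nf

lemma aampOn_hits_zero (hn : Even n) {μ : ℂ} (hμ : μ ≠ 0) (t : ℤ) :
    AampOn n k μ t (Hits 0) = μ ^ ((n + 1) * t) * AampOn n k μ⁻¹ t (Hits (n - 1)) := by
  have hnK : Even (n + 2 * k) := hn.add (even_two_mul k)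
  have hrev : ∀ r : Fin (2 * k) → Fin n,
      Fin.revPerm.arrowCongr Fin.revPerm r = fun j => (r j.rev).rev := fun r => rfl
  have hsymm : (Fin.revPerm.arrowCongr Fin.revPerm : (Fin (2 * k) → Fin n) ≃ _).symm =
      Fin.revPerm.arrowCongr Fin.revPerm := by
    simp [Equiv.arrowCongr_symm, Fin.revPerm_symm]
  have hmono : ∀ r : Fin (2 * k) → Fin n, StrictMono r →
      StrictMono (fun j : Fin (2 * k) => (r j.rev).rev) :=
    fun r hr a b hab => Fin.rev_lt_rev.2 (hr (Fin.rev_lt_rev.2 hab))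
  refine aampOn_eq_of_equiv (Fin.revPerm.arrowCongr Fin.revPerm) (fun r hr ⟨j, hj⟩ => ?_)
    (fun r hr ⟨j, hj⟩ => ?_) (fun r _ _ => ?_) (fun r _ _ hs => ?_)
  · refine ⟨hmono r hr, j.rev, ?_⟩
    simp only [hrev, Fin.rev_rev, Fin.val_rev, hj]
  · rw [hsymm]
    refine ⟨hmono r hr, j.rev, ?_⟩
    have := (r j).isLt
    simp only [hrev, Fin.rev_rev, Fin.val_rev, hj]
    omega
  · rw [hrev, sig_rev_comp_rev hnK]
  · rw [hrev, wsig_rev_comp_rev hnK, hs, inv_zpow', ← zpow_add₀ hμ]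
    ring_nf

lemma aampOn_hits_top_inv (hn : Even n) {μ : ℂ} (hμ : μ ≠ 0) (hμn : μ ^ n = 1) (t : ℤ) :
    AampOn n k μ t (Hits (n - 1)) = AampOn n k μ⁻¹ t (Hits (n - 1)) := by
  have hrf : ∀ r : Fin (2 * k) → Fin n,
      (Fin.revInitPerm (2 * k)).arrowCongr (Fin.revInitPerm n) r =
        fun j => (r j.revInit).revInit := fun r => rfl
  have hsymm : ((Fin.revInitPerm (2 * k)).arrowCongr (Fin.revInitPerm n)).symm =
      (Fin.revInitPerm (2 * k)).arrowCongr (Fin.revInitPerm n) := by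
    simp [Equiv.arrowCongr_symm, Fin.revInitPerm, Function.Involutive.toPerm_symm]
  have hhits : ∀ r : Fin (2 * k) → Fin n,
      Hits (n - 1) r → Hits (n - 1) (fun j => (r j.revInit).revInit) := by
    rintro r ⟨j, hj⟩
    refine ⟨j.revInit, ?_⟩
    dsimp only
    rw [Fin.revInit_involutive, Fin.revInit_of_not_lt (by omega), hj]
  rw [← one_mul (AampOn n k μ⁻¹ t _)]
  refine aampOn_eq_of_equiv ((Fin.revInitPerm (2 * k)).arrowCongr (Fin.revInitPerm n))
    (fun r hr htop => ?_) (fun r hr htop => ?_) (fun r _ _ => ?_) (fun r _ _ _ => ?_)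
  · rw [hrf]
    exact ⟨hr.revInit_comp_revInit htop, hhits r htop⟩
  · rw [hsymm, hrf]
    exact ⟨hr.revInit_comp_revInit htop, hhits r htop⟩
  · rw [hrf, sig_revInit_comp_revInit hn (even_two_mul k)]
  · rw [hrf, one_mul, inv_zpow', zpow_eq_zpow_of_dvd_sub hμ hμn]
    rw [sub_neg_eq_add, add_comm]
    exact dvd_wsig_revInit_comp_revInit_add hn (even_two_mul k) r

lemma aamp_sub_zpow_mul_aamp_inv [NeZero n] (hn : Even n) {μ : ℂ} (hμ : μ ≠ 0)
    (hμn : μ ^ n = 1) (s : ℤ) :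
    Aamp n k μ s - μ ^ (-s) * Aamp n k μ⁻¹ (-s) =
      AampOn n k μ s (Hits (n - 1)) - AampOn n k μ (-s) (Hits (n - 1)) := by
  have htop := aamp_eq_aampOn_add (n := n) (k := k) μ s (Hits (n - 1))
  have hbot := aamp_eq_aampOn_add (n := n) (k := k) μ⁻¹ (-s) (Hits 0)
  rw [aampOn_not_hits_top hμ] at htop
  rw [aampOn_hits_zero hn (inv_ne_zero hμ), inv_inv] at hbot
  have hroot : μ ^ (-s) * μ⁻¹ ^ ((n + 1) * -s) = 1 := by
    rw [inv_zpow', ← zpow_add₀ hμ, show -s + -((n + 1) * -s) = n * s by ring, zpow_mul,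
      zpow_natCast, hμn, one_zpow]
  rw [htop, hbot]
  linear_combination (-AampOn n k μ (-s) (Hits (n - 1))) * hroot

theorem aamp_add_aamp_inv_neg [NeZero n] (hn : Even n) {μ : ℂ} (hμ : μ ≠ 0)
    (hμn : μ ^ n = 1) {s : ℤ} (hμs : μ ^ s ≠ 1) :
    Aamp n k μ s + Aamp n k μ⁻¹ (-s) = 0 := by
  have h := aamp_sub_zpow_mul_aamp_inv (k := k) hn hμ hμn s
  have h' := aamp_sub_zpow_mul_aamp_inv (k := k) hn (inv_ne_zero hμ)
    (by rw [inv_pow, hμn, inv_one]) (-s)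
  rw [inv_inv, neg_neg, inv_zpow', ← aampOn_hits_top_inv hn hμ hμn (-s),
    ← aampOn_hits_top_inv hn hμ hμn s] at h'
  have hμs' : 1 - μ ^ (-s) ≠ 0 := by
    rw [sub_ne_zero, ne_comm, zpow_neg, inv_ne_one]
    exact hμs
  refine (mul_eq_zero.1 ?_).resolve_left hμs'
  linear_combination h + h'

lemma conj_aamp (μ : ℂ) (s : ℤ) :
    starRingEnd ℂ (Aamp n k μ s) = Aamp n k (starRingEnd ℂ μ) s := by
  simp only [Aamp, map_sum, map_zpow₀]

lemma isPrimitiveRoot_sq_of_UR {n : ℕ} (hn : n ≠ 0) {Φ : ℝ}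
    (hUR : (∃ m : ℕ, n = 4 * m ∧ (Φ = Real.pi / m ∨ Φ = -(Real.pi / m))) ∨
           (∃ m : ℕ, n = 4 * m + 2 ∧
             (Φ = 2 * m * Real.pi / (2 * m + 1) ∨ Φ = -(2 * m * Real.pi / (2 * m + 1)))))
    {ω : ℂ} (hω : ω = exp (I * Φ / 2)) : IsPrimitiveRoot (ω ^ 2) (n / 2) := by
  have hsq : ω ^ 2 = exp (Φ * I) := by
    rw [hω, ← exp_nat_mul]
    ring_nf
  have hsign : ∀ θ : ℝ, (Φ = θ ∨ Φ = -θ) → IsPrimitiveRoot (exp (θ * I)) (n / 2) →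
      IsPrimitiveRoot (ω ^ 2) (n / 2) := by
    rintro θ (rfl | rfl) hθ
    · rwa [hsq]
    · rw [hsq, ofReal_neg, neg_mul, exp_neg]
      exact hθ.inv
  rcases hUR with ⟨m, rfl, hΦ⟩ | ⟨m, rfl, hΦ⟩
  · refine hsign _ hΦ ?_
    have hm : (m : ℂ) ≠ 0 := by exact_mod_cast (by omega : m ≠ 0)
    rw [show 4 * m / 2 = 2 * m by omega]
    convert isPrimitiveRoot_exp (2 * m) (by omega) using 2
    push_cast
    field_simp
  · refine hsign _ hΦ ?_
    rw [show (4 * m + 2) / 2 = 2 * m + 1 by omega]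
    convert isPrimitiveRoot_exp_of_coprime m (2 * m + 1) (by omega) (by simp) using 2
    push_cast
    field_simp

lemma zpow_ne_one_of_isPrimitiveRoot_sq {ω : ℂ} {N : ℕ} (h : IsPrimitiveRoot (ω ^ 2) N)
    {s : ℤ} (hs : Even s) (hs0 : s ≠ 0) (hsN : |s| < 2 * N) : ω ^ s ≠ 1 := by
  obtain ⟨σ, rfl⟩ := hs
  intro h1
  rw [← two_mul, zpow_mul, zpow_ofNat] at h1
  have hdvd := (h.zpow_eq_one_iff_dvd σ).1 h1
  rw [← two_mul, abs_mul, abs_two] at hsN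
  have := Int.eq_zero_of_abs_lt_dvd hdvd (by omega)
  omega

theorem stmt8 (n : ℕ) (hn4 : 4 ≤ n) (hne : Even n) (Φ : ℝ)
    (hUR : (∃ m : ℕ, n = 4 * m ∧ (Φ = Real.pi / m ∨ Φ = -(Real.pi / m))) ∨
           (∃ m : ℕ, n = 4 * m + 2 ∧
             (Φ = 2 * m * Real.pi / (2 * m + 1) ∨ Φ = -(2 * m * Real.pi / (2 * m + 1)))))
    (ω : ℂ) (hω : ω = Complex.exp (Complex.I * Φ / 2)) :
    ∀ k : ℕ, 1 ≤ k → k < n / 2 →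
      ∀ s : ℤ, Even s → 0 < |s| → |s| < (n : ℤ) →
        Aamp n k ω s = -(starRingEnd ℂ) (Aamp n k ω (-s)) := by
  intro k _ _ s hs hs0 hsn
  have hn0 : n ≠ 0 := by omega
  have : NeZero n := ⟨hn0⟩
  have hζ := isPrimitiveRoot_sq_of_UR hn0 hUR hω
  have hn2 : 2 * (n / 2) = n := Nat.two_mul_div_two_of_even hne
  have hωn : ω ^ n = 1 := by rw [← hn2, pow_mul, hζ.pow_eq_one]
  have hωs : ω ^ s ≠ 1 :=
    zpow_ne_one_of_isPrimitiveRoot_sq hζ hs (abs_pos.1 hs0)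
      (hsn.trans_eq (by exact_mod_cast hn2.symm))
  have hω0 : ω ≠ 0 := hω ▸ exp_ne_zero _
  rw [conj_aamp, ← inv_eq_conj (norm_eq_one_of_pow_eq_one hωn hn0), eq_neg_iff_add_eq_zero]
  exact aamp_add_aamp_inv_neg hne hω0 hωn hωs
end

section
/- Let n ≥ 4 be even, let Φ be a UR choice (Φ = ±π/m if n = 4m, Φ = ±2mπ/(2m+1) if n = 4m+2), and let ω = e^{iΦ/2} (so that ω^n = 1). Then for every 1 ≤ k < n/2 and every even integer s with 0 ≤ |s| ≤ 2k, A_s^{(k)} = ω^s (A_s^{(k)})^*. -/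
open Complex Finset

/-!
The reflection `r_j ↦ n + 1 − r_{2k+1−j}` is an involution on strictly increasing
`2k`-tuples in `[1, n]`. For `n` even it preserves the signature `S` and sends the weighted
signature `W` to `(n + 1) S − W`, so it turns `A_s` computed at `ω` into `ω^{(n+1)s}` times
`A_s` computed at `ω⁻¹`. For the UR choices `ω^n = 1` and `ω⁻¹ = ω^*`, which leaves
`ω^s A_s^*`.
-/

section Reflection

variable {m N : ℕ}

def tupleRev (r : Fin m → Fin N) : Fin m → Fin N := fun j => (r j.rev).rev

lemma tupleRev_tupleRev (r : Fin m → Fin N) : tupleRev (tupleRev r) = r := by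
  funext j
  simp [tupleRev]

lemma StrictMono.tupleRev {r : Fin m → Fin N} (hr : StrictMono r) : StrictMono (tupleRev r) :=
  fun _ _ hij => Fin.rev_lt_rev.mpr (hr (Fin.rev_lt_rev.mpr hij))

lemma neg_one_pow_rev_add_rev (h : Even (m + N)) (i : Fin m) (a : Fin N) :
    (-1 : ℤ) ^ ((i.rev : ℕ) + (a.rev : ℕ)) = (-1) ^ ((i : ℕ) + (a : ℕ)) := by
  obtain ⟨t, ht⟩ := h
  have hi := i.isLt
  have ha := a.isLt
  rw [neg_one_pow_eq_pow_mod_two, Fin.val_rev, Fin.val_rev,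
    neg_one_pow_eq_pow_mod_two (n := (i : ℕ) + a)]
  congr 1
  omega

lemma sig_tupleRev (h : Even (m + N)) (r : Fin m → Fin N) : Sig (tupleRev r) = Sig r := by
  rw [Sig, ← Equiv.sum_comp Fin.revPerm]
  refine sum_congr rfl fun j _ => ?_
  simp only [Fin.revPerm_apply, tupleRev, Fin.rev_rev]
  exact neg_one_pow_rev_add_rev h j (r j)

lemma wsig_tupleRev (h : Even (m + N)) (r : Fin m → Fin N) :
    Wsig (tupleRev r) = ((N : ℤ) + 1) * Sig r - Wsig r := by
  rw [Wsig, ← Equiv.sum_comp Fin.revPerm, Sig, Wsig, mul_sum, ← sum_sub_distrib]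
  refine sum_congr rfl fun j _ => ?_
  simp only [Fin.revPerm_apply, tupleRev, Fin.rev_rev]
  rw [neg_one_pow_rev_add_rev h j (r j), Fin.val_rev]
  have hrj := (r j).isLt
  push_cast [Nat.sub_add_cancel hrj, Nat.cast_sub hrj]
  ring

end Reflection

lemma Aamp_eq_zpow_mul_Aamp_inv {n : ℕ} (hn : Even n) (k : ℕ) {ω : ℂ} (hω : ω ≠ 0)
    (s : ℤ) :
    Aamp n k ω s = ω ^ (((n : ℤ) + 1) * s) * Aamp n k ω⁻¹ s := by
  classical
  have hpar : Even (2 * k + n) := (even_two_mul k).add hn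
  have hmem : ∀ r : Fin (2 * k) → Fin n, StrictMono r ∧ Sig r = s →
      StrictMono (tupleRev r) ∧ Sig (tupleRev r) = s :=
    fun r ⟨hr, hs⟩ => ⟨hr.tupleRev, (sig_tupleRev hpar r).trans hs⟩
  rw [Aamp, Aamp, mul_sum]
  refine sum_nbij' tupleRev tupleRev (fun r hr => ?_) (fun r hr => ?_)
    (fun r _ => tupleRev_tupleRev r) (fun r _ => tupleRev_tupleRev r) (fun r hr => ?_)
  · simpa using hmem r (by simpa using hr)
  · simpa using hmem r (by simpa using hr)
  · rw [wsig_tupleRev hpar, (mem_filter.mp hr).2.2, inv_zpow', ← zpow_add₀ hω]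
    ring_nf

lemma conj_Aamp (n k : ℕ) (ω : ℂ) (s : ℤ) :
    starRingEnd ℂ (Aamp n k ω s) = Aamp n k (starRingEnd ℂ ω) s := by
  simp only [Aamp, map_sum, map_zpow₀]

lemma exists_int_mul_two_pi_of_UR {n : ℕ} {Φ : ℝ}
    (hUR : (∃ m : ℕ, n = 4 * m ∧ (Φ = Real.pi / m ∨ Φ = -(Real.pi / m))) ∨
           (∃ m : ℕ, n = 4 * m + 2 ∧
             (Φ = 2 * m * Real.pi / (2 * m + 1) ∨ Φ = -(2 * m * Real.pi / (2 * m + 1))))) :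
    ∃ c : ℤ, (n : ℝ) * (Φ / 2) = c * (2 * Real.pi) := by
  rcases hUR with ⟨m, rfl, hΦ⟩ | ⟨m, rfl, hΦ⟩
  · rcases eq_or_ne m 0 with rfl | hm
    · exact ⟨0, by simp⟩
    have hm : (m : ℝ) ≠ 0 := Nat.cast_ne_zero.mpr hm
    rcases hΦ with rfl | rfl
    · exact ⟨1, by push_cast; field_simp; ring⟩
    · exact ⟨-1, by push_cast; field_simp; ring⟩
  · have hm : (2 * m + 1 : ℝ) ≠ 0 := by positivity
    rcases hΦ with rfl | rfl
    · exact ⟨m, by push_cast; field_simp; ring⟩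
    · exact ⟨-m, by push_cast; field_simp; ring⟩

lemma exp_half_angle_pow_eq_one {n : ℕ} {Φ : ℝ}
    (h : ∃ c : ℤ, (n : ℝ) * (Φ / 2) = c * (2 * Real.pi)) :
    exp (I * Φ / 2) ^ n = 1 := by
  obtain ⟨c, hc⟩ := h
  rw [← exp_nat_mul, exp_eq_one_iff]
  refine ⟨c, ?_⟩
  have hc' : (n : ℂ) * (Φ / 2) = c * (2 * Real.pi) := by exact_mod_cast congrArg ofReal hc
  linear_combination I * hc'

lemma conj_exp_half_angle (Φ : ℝ) :
    starRingEnd ℂ (exp (I * Φ / 2)) = (exp (I * Φ / 2))⁻¹ := by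
  have h : I * Φ / 2 = ((Φ / 2 : ℝ) : ℂ) * I := by push_cast; ring
  rw [inv_eq_conj (by rw [h, norm_exp_ofReal_mul_I])]

theorem stmt10_general (n : ℕ) (hne : Even n) (Φ : ℝ)
    (hUR : (∃ m : ℕ, n = 4 * m ∧ (Φ = Real.pi / m ∨ Φ = -(Real.pi / m))) ∨
           (∃ m : ℕ, n = 4 * m + 2 ∧
             (Φ = 2 * m * Real.pi / (2 * m + 1) ∨ Φ = -(2 * m * Real.pi / (2 * m + 1)))))
    (ω : ℂ) (hω : ω = Complex.exp (Complex.I * Φ / 2)) :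
    ∀ k : ℕ, 1 ≤ k → k < n / 2 →
      ∀ s : ℤ, Even s → |s| ≤ 2 * (k : ℤ) →
        Aamp n k ω s = ω ^ s * (starRingEnd ℂ) (Aamp n k ω s) := by
  intro k _ _ s _ _
  have hω0 : ω ≠ 0 := hω ▸ exp_ne_zero _
  have hωn : ω ^ n = 1 := hω ▸ exp_half_angle_pow_eq_one (exists_int_mul_two_pi_of_UR hUR)
  have hconj : starRingEnd ℂ ω = ω⁻¹ := hω ▸ conj_exp_half_angle Φ
  calc Aamp n k ω s = ω ^ (((n : ℤ) + 1) * s) * Aamp n k ω⁻¹ s :=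
        Aamp_eq_zpow_mul_Aamp_inv hne k hω0 s
    _ = (ω ^ n) ^ s * ω ^ s * Aamp n k ω⁻¹ s := by
        rw [add_one_mul, zpow_add₀ hω0, zpow_mul, zpow_natCast]
    _ = ω ^ s * starRingEnd ℂ (Aamp n k ω s) := by
        rw [hωn, one_zpow, one_mul, conj_Aamp, hconj]

theorem stmt10 (n : ℕ) (hn4 : 4 ≤ n) (hne : Even n) (Φ : ℝ)
    (hUR : (∃ m : ℕ, n = 4 * m ∧ (Φ = Real.pi / m ∨ Φ = -(Real.pi / m))) ∨
           (∃ m : ℕ, n = 4 * m + 2 ∧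
             (Φ = 2 * m * Real.pi / (2 * m + 1) ∨ Φ = -(2 * m * Real.pi / (2 * m + 1)))))
    (ω : ℂ) (hω : ω = Complex.exp (Complex.I * Φ / 2)) :
    ∀ k : ℕ, 1 ≤ k → k < n / 2 →
      ∀ s : ℤ, Even s → |s| ≤ 2 * (k : ℤ) →
        Aamp n k ω s = ω ^ s * (starRingEnd ℂ) (Aamp n k ω s) :=
  stmt10_general n hne Φ hUR ω hω
end

section
/- Let n be even and 1 ≤ k ≤ n/2, and let D_I be the set of strictly increasing 2k-tuples r in [1,n] with r_{2k} < n. Define τ_I : D_I → D_I by τ_I(r)_j = n − r_{2k+1−j} for 1 ≤ j ≤ 2k. Then τ_I is well defined, is an involution on D_I, and for every r ∈ D_I, S(τ_I(r)) = −S(r) and W(τ_I(r)) = W(r) − n S(r). -/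
/-! Reversing the tuple and reflecting its entries, `r ↦ n - r (2k + 1 - ·)`, changes the
parity of `j + r_j` at every position, because `(2k + 1 - j) + (n - r_j)` and `j + r_j` add up
to the odd number `2k + 1 + n`. Hence every sign of `S` flips, and in `W` each term
`± r_j` becomes `∓ (n - r_j) = ± r_j ∓ n`. -/

open Finset

/-- Signature `S(r) = Σ_{j=1}^{2k} (−1)^{j+r_j}`. -/
def SigI (k : ℕ) (r : ℕ → ℕ) : ℤ :=
  ∑ j ∈ Finset.Icc 1 (2 * k), (-1) ^ (j + r j)

/-- Weighted signature `W(r) = Σ_{j=1}^{2k} (−1)^{j+r_j} r_j`. -/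
def WsigI (k : ℕ) (r : ℕ → ℕ) : ℤ :=
  ∑ j ∈ Finset.Icc 1 (2 * k), (-1) ^ (j + r j) * (r j : ℤ)

theorem sum_Icc_one_reflect {M : Type*} [AddCommMonoid M] (f : ℕ → M) (m : ℕ) :
    ∑ j ∈ Icc 1 m, f (m + 1 - j) = ∑ j ∈ Icc 1 m, f j := by
  simpa [Ico_add_one_right_eq_Icc] using sum_Ico_reflect f 1 (Nat.le_succ (m + 1))

theorem neg_one_pow_eq_neg_of_odd_add {R : Type*} [Monoid R] [HasDistribNeg R] {a b : ℕ}
    (h : Odd (a + b)) : (-1 : R) ^ a = -(-1) ^ b := by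
  rw [← mul_neg_one ((-1 : R) ^ b), ← pow_succ]
  exact neg_one_pow_congr (by grind)

theorem lt_of_lt_add_one_of_last_lt {m n : ℕ} {r : ℕ → ℕ}
    (hinc : ∀ j : ℕ, 1 ≤ j → j < m → r j < r (j + 1)) (hub : r m < n)
    (j : ℕ) (hj1 : 1 ≤ j) (hjm : j ≤ m) : r j < n := by
  have hmono : StrictMonoOn r (Set.Icc 1 m) :=
    strictMonoOn_of_lt_succ Set.ordConnected_Icc fun a _ ha ha' =>
      hinc a ha.1 (Order.succ_le_iff.mp ha'.2)
  exact (hmono.monotoneOn ⟨hj1, hjm⟩ ⟨hj1.trans hjm, le_rfl⟩ hjm).trans_lt hub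

section Reflect

variable {n k : ℕ} {r t : ℕ → ℕ}
  (hr : ∀ j : ℕ, 1 ≤ j → j ≤ 2 * k → r j ≤ n)
  (ht : ∀ j : ℕ, 1 ≤ j → j ≤ 2 * k → t j = n - r (2 * k + 1 - j))
include hr ht

theorem neg_one_pow_add_reflect (hn : Even n) (j : ℕ) (hj1 : 1 ≤ j) (hjk : j ≤ 2 * k) :
    (-1 : ℤ) ^ (j + t j) = -(-1) ^ (2 * k + 1 - j + r (2 * k + 1 - j)) := by
  obtain ⟨m, rfl⟩ := hn
  have := hr (2 * k + 1 - j) (by omega) (by omega)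
  exact ht j hj1 hjk ▸ neg_one_pow_eq_neg_of_odd_add ⟨k + m, by omega⟩

theorem sigI_eq_neg_of_reflect (hn : Even n) : SigI k t = -SigI k r := by
  calc SigI k t = ∑ j ∈ Icc 1 (2 * k), -(-1 : ℤ) ^ (2 * k + 1 - j + r (2 * k + 1 - j)) :=
        sum_congr rfl fun j hj =>
          neg_one_pow_add_reflect hr ht hn j (mem_Icc.mp hj).1 (mem_Icc.mp hj).2
    _ = -SigI k r := by
        rw [sum_Icc_one_reflect (fun j => -(-1 : ℤ) ^ (j + r j)), sum_neg_distrib, SigI]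

theorem wsigI_eq_sub_of_reflect (hn : Even n) : WsigI k t = WsigI k r - n * SigI k r := by
  have hterm : ∀ j ∈ Icc 1 (2 * k), (-1 : ℤ) ^ (j + t j) * (t j : ℤ) =
      (-1) ^ (2 * k + 1 - j + r (2 * k + 1 - j)) * (r (2 * k + 1 - j) : ℤ) -
        n * (-1) ^ (2 * k + 1 - j + r (2 * k + 1 - j)) := by
    intro j hj
    obtain ⟨hj1, hjk⟩ := mem_Icc.mp hj
    rw [neg_one_pow_add_reflect hr ht hn j hj1 hjk, ht j hj1 hjk,
      Nat.cast_sub (hr _ (by omega) (by omega))]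
    ring
  rw [WsigI, sum_congr rfl hterm,
    sum_Icc_one_reflect (fun j => (-1 : ℤ) ^ (j + r j) * (r j : ℤ) - n * (-1) ^ (j + r j)),
    sum_sub_distrib, ← mul_sum, WsigI, SigI]

end Reflect

theorem stmt12_general (n k : ℕ) (hne : Even n) (hk1 : 1 ≤ k)
    (r t : ℕ → ℕ)
    (hinc : ∀ j : ℕ, 1 ≤ j → j < 2 * k → r j < r (j + 1))
    (hlb : 1 ≤ r 1) (hub : r (2 * k) < n)
    (ht : ∀ j : ℕ, 1 ≤ j → j ≤ 2 * k → t j = n - r (2 * k + 1 - j)) :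
    ((∀ j : ℕ, 1 ≤ j → j < 2 * k → t j < t (j + 1)) ∧ 1 ≤ t 1 ∧ t (2 * k) < n) ∧
    (∀ j : ℕ, 1 ≤ j → j ≤ 2 * k → n - t (2 * k + 1 - j) = r j) ∧
    SigI k t = -SigI k r ∧
    WsigI k t = WsigI k r - n * SigI k r := by
  have hr_lt := lt_of_lt_add_one_of_last_lt hinc hub
  have hr_le : ∀ j : ℕ, 1 ≤ j → j ≤ 2 * k → r j ≤ n := fun j hj1 hjk => (hr_lt j hj1 hjk).le
  refine ⟨⟨?_, ?_, ?_⟩, ?_, sigI_eq_neg_of_reflect hr_le ht hne,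
    wsigI_eq_sub_of_reflect hr_le ht hne⟩
  · intro j hj1 hjk
    have hstep := hinc (2 * k - j) (by omega) (by omega)
    have := hr_lt (2 * k + 1 - j) (by omega) (by omega)
    rw [show 2 * k - j + 1 = 2 * k + 1 - j by omega] at hstep
    rw [ht j hj1 hjk.le, ht (j + 1) (by omega) hjk, show 2 * k + 1 - (j + 1) = 2 * k - j by omega]
    omega
  · rw [ht 1 le_rfl (by omega), Nat.add_sub_cancel]
    omega
  · rw [ht (2 * k) (by omega) le_rfl, show 2 * k + 1 - 2 * k = 1 by omega]
    omega
  · intro j hj1 hjk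
    have := hr_lt j hj1 hjk
    rw [ht (2 * k + 1 - j) (by omega) (by omega), show 2 * k + 1 - (2 * k + 1 - j) = j by omega]
    omega

theorem stmt12 (n k : ℕ) (hne : Even n) (hk1 : 1 ≤ k) (hk2 : k ≤ n / 2)
    (r t : ℕ → ℕ)
    (hinc : ∀ j : ℕ, 1 ≤ j → j < 2 * k → r j < r (j + 1))
    (hlb : 1 ≤ r 1) (hub : r (2 * k) < n)
    (ht : ∀ j : ℕ, 1 ≤ j → j ≤ 2 * k → t j = n - r (2 * k + 1 - j)) :
    ((∀ j : ℕ, 1 ≤ j → j < 2 * k → t j < t (j + 1)) ∧ 1 ≤ t 1 ∧ t (2 * k) < n) ∧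
    (∀ j : ℕ, 1 ≤ j → j ≤ 2 * k → n - t (2 * k + 1 - j) = r j) ∧
    SigI k t = -SigI k r ∧
    WsigI k t = WsigI k r - n * SigI k r :=
  stmt12_general n k hne hk1 r t hinc hlb hub ht
end

section
/- Let m ≥ 1, n = 4m, and ω = e^{iπ/(2m)}. Define β_j = j − 1 for odd j and β_j = −j for even j (1 ≤ j ≤ n), and let K_j be the 2×2 complex matrix with zero diagonal, (1,2)-entry ω^{β_j}, and (2,1)-entry ω^{−β_j}. Then for every complex number t, the ordered product P(t) = (I + tK_1)(I + tK_2)⋯(I + tK_n) equals (1 − t²)^{2m} I. Consequently, the coefficient of t^{2k} in the (1,1)-entry of P(t) is (−1)^k C(2m, k) for 0 ≤ k ≤ 2m. -/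
open Complex Matrix Finset

/-- Ordered product `P(t) = (I + tK_1)(I + tK_2)⋯(I + tK_n)`. -/
noncomputable def Pprod (n : ℕ) (K : ℕ → Matrix (Fin 2) (Fin 2) ℂ) (t : ℂ) : Matrix (Fin 2) (Fin 2) ℂ :=
  ((List.range n).map (fun j => 1 + t • K (j + 1))).prod

/-!
Every `K_j` is an involution, so `(I + tK_j)(I - tK_j) = (1 - t²) I` is a central scalar.
Since `ω^{2m} = -1` and `β` changes by `±2m` under `j ↦ j + 2m` and under the reflection
`m - j ↦ m + 1 + j`, the factors satisfy `K_{j+2m} = -K_j` and `K_{m+1+j} = -K_{m-j}`.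
Thus each half of the product has the shape `(I + tX_1)⋯(I + tX_m)(I - tX_m)⋯(I - tX_1)`,
which telescopes from the inside to `(1 - t²)^m I`, and the second half is the first at `-t`.
-/

section ListRange

variable {α : Type*} [Neg α] {f : ℕ → α} {n : ℕ}

theorem List.map_range_two_mul_eq_append_reverse_map_neg
    (hf : ∀ j < n, f (n + j) = -f (n - 1 - j)) :
    (List.range (2 * n)).map f =
      (List.range n).map f ++ (((List.range n).map f).map (-·)).reverse := by
  rw [two_mul, List.range_add, List.map_append, List.map_map]
  congr 1
  refine List.ext_getElem (by simp) fun j h₁ h₂ => ?_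
  simp only [List.length_map, List.length_range] at h₁
  simp [List.getElem_reverse, hf j h₁]

theorem List.map_range_add_self_eq_append_map_neg (hf : ∀ j < n, f (n + j) = -f j) :
    (List.range (n + n)).map f = (List.range n).map f ++ ((List.range n).map f).map (-·) := by
  rw [List.range_add, List.map_append, List.map_map, List.map_map]
  congr 1
  exact List.map_congr_left fun j hj => hf j (List.mem_range.mp hj)

end ListRange

section Involution

variable {R A : Type*} [CommRing R] [Ring A] [Algebra R A]

theorem one_add_smul_mul_one_sub_smul {x : A} (hx : x * x = 1) (t : R) :
    (1 + t • x) * (1 - t • x) = algebraMap R A (1 - t ^ 2) := by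
  calc (1 + t • x) * (1 - t • x) = 1 - (t * t) • (x * x) := by
        simp only [add_mul, mul_sub, one_mul, mul_one, smul_mul_smul_comm]; abel
    _ = algebraMap R A (1 - t ^ 2) := by
        rw [hx, Algebra.algebraMap_eq_smul_one, sub_smul, one_smul, sq]

theorem List.prod_map_one_add_smul_mul_prod_reverse_map_one_sub_smul {l : List A}
    (hl : ∀ x ∈ l, x * x = 1) (t : R) :
    (l.map (1 + t • ·)).prod * (l.reverse.map (1 - t • ·)).prod =
      algebraMap R A ((1 - t ^ 2) ^ l.length) := by
  induction l with
  | nil => simp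
  | cons x l ih =>
    rw [List.forall_mem_cons] at hl
    rw [List.map_cons, List.prod_cons, List.reverse_cons, List.map_append, List.prod_append,
      List.map_singleton, List.prod_singleton, mul_assoc, ← mul_assoc (l.map _).prod, ih hl.2,
      Algebra.left_comm, one_add_smul_mul_one_sub_smul hl.1, ← map_mul, List.length_cons,
      ← pow_succ]

theorem List.prod_map_one_add_smul_append_reverse_map_neg {l : List A}
    (hl : ∀ x ∈ l, x * x = 1) (t : R) :
    ((l ++ (l.map (-·)).reverse).map (1 + t • ·)).prod =
      algebraMap R A ((1 - t ^ 2) ^ l.length) := by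
  rw [List.map_append, List.prod_append, ← List.map_reverse, List.map_map,
    ← List.prod_map_one_add_smul_mul_prod_reverse_map_one_sub_smul hl t]
  congr 3
  funext x
  simp [sub_eq_add_neg]

theorem List.prod_map_range_four_mul_one_add_smul {f : ℕ → A} {n : ℕ}
    (hsq : ∀ j < n, f j * f j = 1)
    (hreflect : ∀ j < n, f (n + j) = -f (n - 1 - j))
    (hshift : ∀ j < 2 * n, f (2 * n + j) = -f j) (t : R) :
    ((List.range (4 * n)).map (fun j => 1 + t • f j)).prod =
      algebraMap R A ((1 - t ^ 2) ^ (2 * n)) := by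
  set l := (List.range n).map f
  set L := (List.range (2 * n)).map f
  have hl : ∀ x ∈ l, x * x = 1 := by simpa [l] using hsq
  have hL : L = l ++ (l.map (-·)).reverse :=
    List.map_range_two_mul_eq_append_reverse_map_neg hreflect
  have hsplit : (List.range (4 * n)).map f = L ++ L.map (-·) := by
    rw [show 4 * n = 2 * n + 2 * n by ring]
    exact List.map_range_add_self_eq_append_map_neg hshift
  have hneg : (L.map (-·)).map (1 + t • ·) = L.map (1 + (-t) • ·) := by
    simp [Function.comp_def]
  rw [show (fun j => 1 + t • f j) = (1 + t • ·) ∘ f from rfl, ← List.map_map, hsplit,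
    List.map_append, List.prod_append, hneg, hL,
    List.prod_map_one_add_smul_append_reverse_map_neg hl,
    List.prod_map_one_add_smul_append_reverse_map_neg hl, neg_sq, ← map_mul, ← pow_add,
    List.length_map, List.length_range, two_mul]

end Involution

theorem one_sub_sq_pow {R : Type*} [CommRing R] (t : R) (n : ℕ) :
    (1 - t ^ 2) ^ n =
      ∑ k ∈ Finset.range (n + 1), (-1) ^ k * (n.choose k : R) * t ^ (2 * k) := by
  rw [sub_eq_neg_add, add_pow]
  refine Finset.sum_congr rfl fun k _ => ?_
  rw [one_pow, mul_one, neg_pow, pow_mul']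
  ring

section Antidiagonal

variable {F : Type*} [Field F] {ω : F}

def zpowAntidiag (ω : F) (b : ℤ) : Matrix (Fin 2) (Fin 2) F :=
  !![0, ω ^ b; ω ^ (-b), 0]

theorem zpowAntidiag_mul_self (hω : ω ≠ 0) (b : ℤ) :
    zpowAntidiag ω b * zpowAntidiag ω b = 1 := by
  rw [zpowAntidiag, Matrix.mul_fin_two, Matrix.one_fin_two]
  simp [_root_.zpow_neg, zpow_ne_zero b hω]

theorem zpowAntidiag_add (hω : ω ≠ 0) {c : ℤ} (hc : ω ^ c = -1) (b : ℤ) :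
    zpowAntidiag ω (b + c) = -zpowAntidiag ω b := by
  have h : ω ^ (-(b + c)) = -ω ^ (-b) := by
    rw [neg_add, zpow_add₀ hω, _root_.zpow_neg ω c, hc, inv_neg, inv_one, mul_neg_one]
  rw [zpowAntidiag, zpowAntidiag, zpow_add₀ hω, hc, h, mul_neg_one]
  simp

theorem zpowAntidiag_eq_neg_of_eq_add_or_eq_sub (hω : ω ≠ 0) {c : ℤ} (hc : ω ^ c = -1)
    {b b' : ℤ} (h : b' = b + c ∨ b' = b - c) :
    zpowAntidiag ω b' = -zpowAntidiag ω b := by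
  have hc' : ω ^ (-c) = -1 := by rw [_root_.zpow_neg, hc, inv_neg, inv_one]
  rcases h with rfl | rfl
  · exact zpowAntidiag_add hω hc b
  · exact zpowAntidiag_add hω hc' b

end Antidiagonal

theorem exp_pi_mul_I_div_zpow_two_mul {m : ℕ} (hm : m ≠ 0) :
    Complex.exp (Complex.I * Real.pi / (2 * m)) ^ (2 * m : ℤ) = -1 := by
  rw [← Complex.exp_int_mul, ← Complex.exp_pi_mul_I]
  congr 1
  push_cast
  field_simp

def urExponent (j : ℕ) : ℤ := if Odd j then (j : ℤ) - 1 else -(j : ℤ)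

theorem urExponent_two_mul_add (m j : ℕ) :
    urExponent (2 * m + j) = urExponent j + 2 * m ∨
      urExponent (2 * m + j) = urExponent j - 2 * m := by
  have hpar : Odd (2 * m + j) ↔ Odd j := by
    rw [Nat.odd_iff, Nat.odd_iff]; omega
  unfold urExponent
  by_cases hj : Odd j
  · left; simp only [hpar, hj, if_true]; push_cast; ring
  · right; simp only [hpar, hj, if_false]; push_cast; ring

theorem urExponent_add_add_one {m j : ℕ} (hj : j < m) :
    urExponent (m + j + 1) = urExponent (m - j) + 2 * m ∨
      urExponent (m + j + 1) = urExponent (m - j) - 2 * m := by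
  have hpar : Odd (m + j + 1) ↔ ¬Odd (m - j) := by
    rw [Nat.odd_iff, Nat.odd_iff]; omega
  unfold urExponent
  by_cases hj' : Odd (m - j)
  · right; simp only [hpar, hj', not_true, if_true, if_false]; push_cast [hj.le]; ring
  · left; simp only [hpar, hj', not_false_eq_true, if_true, if_false]; push_cast [hj.le]; ring

theorem stmt17_general (m : ℕ) (ω : ℂ)
    (hω : ω = Complex.exp (Complex.I * Real.pi / (2 * m)))
    (β : ℕ → ℤ)
    (hβ : ∀ j : ℕ, 1 ≤ j → j ≤ 4 * m →
      β j = if Odd j then (j : ℤ) - 1 else -(j : ℤ))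
    (K : ℕ → Matrix (Fin 2) (Fin 2) ℂ)
    (hK : ∀ j : ℕ, 1 ≤ j → j ≤ 4 * m →
      K j = !![0, ω ^ β j; ω ^ (-β j), 0]) :
    ∀ t : ℂ,
      Pprod (4 * m) K t = ((1 - t ^ 2) ^ (2 * m)) • (1 : Matrix (Fin 2) (Fin 2) ℂ) ∧
      (Pprod (4 * m) K t) 0 0 =
        ∑ k ∈ Finset.range (2 * m + 1),
          (-1 : ℂ) ^ k * ((2 * m).choose k : ℂ) * t ^ (2 * k) := by
  have hω0 : ω ≠ 0 := hω ▸ Complex.exp_ne_zero _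
  have hK_antidiag : ∀ j, 1 ≤ j → j ≤ 4 * m → K j = zpowAntidiag ω (urExponent j) :=
    fun j h₁ h₂ => by rw [hK j h₁ h₂, hβ j h₁ h₂, zpowAntidiag, urExponent]
  have hK_neg : ∀ p q, 1 ≤ p → p ≤ 4 * m → 1 ≤ q → q ≤ 4 * m →
      (urExponent p = urExponent q + 2 * m ∨ urExponent p = urExponent q - 2 * m) →
        K p = -K q := fun p q hp₁ hp₂ hq₁ hq₂ h => by
    rw [hK_antidiag p hp₁ hp₂, hK_antidiag q hq₁ hq₂]
    exact zpowAntidiag_eq_neg_of_eq_add_or_eq_sub hω0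
      (hω ▸ exp_pi_mul_I_div_zpow_two_mul (by omega)) h
  have hP : ∀ t : ℂ, Pprod (4 * m) K t = (1 - t ^ 2) ^ (2 * m) • 1 := fun t => by
    rw [Pprod, ← Algebra.algebraMap_eq_smul_one]
    refine List.prod_map_range_four_mul_one_add_smul (fun j hj => ?_) (fun j hj => ?_)
      (fun j hj => ?_) t
    · rw [hK_antidiag _ (by omega) (by omega)]
      exact zpowAntidiag_mul_self hω0 _
    · rw [show m - 1 - j + 1 = m - j by omega]
      exact hK_neg _ _ (by omega) (by omega) (by omega) (by omega) (urExponent_add_add_one hj)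
    · rw [add_assoc]
      exact hK_neg _ _ (by omega) (by omega) (by omega) (by omega) (urExponent_two_mul_add m _)
  intro t
  refine ⟨hP t, ?_⟩
  rw [hP t, Matrix.smul_apply, Matrix.one_apply_eq, smul_eq_mul, mul_one, one_sub_sq_pow]

theorem stmt17 (m : ℕ) (hm : 1 ≤ m) (ω : ℂ)
    (hω : ω = Complex.exp (Complex.I * Real.pi / (2 * m)))
    (β : ℕ → ℤ)
    (hβ : ∀ j : ℕ, 1 ≤ j → j ≤ 4 * m →
      β j = if Odd j then (j : ℤ) - 1 else -(j : ℤ))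
    (K : ℕ → Matrix (Fin 2) (Fin 2) ℂ)
    (hK : ∀ j : ℕ, 1 ≤ j → j ≤ 4 * m →
      K j = !![0, ω ^ β j; ω ^ (-β j), 0]) :
    ∀ t : ℂ,
      Pprod (4 * m) K t = ((1 - t ^ 2) ^ (2 * m)) • (1 : Matrix (Fin 2) (Fin 2) ℂ) ∧
      (Pprod (4 * m) K t) 0 0 =
        ∑ k ∈ Finset.range (2 * m + 1),
          (-1 : ℂ) ^ k * ((2 * m).choose k : ℂ) * t ^ (2 * k) :=
  stmt17_general m ω hω β hβ K hK
end

section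
/- Let m ≥ 2 be even, n = 4m + 2, N = 2m + 1, Φ = 2mπ/N, and for real x define ω^x = e^{iΦx/2}. Define β_j = (−1)^{j+1}(j + N/(2m)) for 1 ≤ j ≤ n, and let K_j be the 2×2 complex matrix with zero diagonal, (1,2)-entry ω^{β_j}, and (2,1)-entry ω^{−β_j}. Then for every complex number t, the ordered product P(t) = (I + tK_1)(I + tK_2)⋯(I + tK_n) equals (1 − t²)^N I. Consequently, the coefficient of t^{2k} in the (1,1)-entry of P(t) is (−1)^k C(N, k) for 0 ≤ k ≤ N. -/
/-!
The factors pair up into scalars. Write `K_j = A(z_j)` with `A(z) = [[0, e^z], [e^(-z), 0]]`, so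
`A(z)² = I` and `A(z + πi) = -A(z)`. If `j + k` is an odd multiple `cN` of `N`, then `j` and `k`
have opposite parity and `z_k - z_j = ±(mc + 1)πi`, an odd multiple of `πi` because `m` is even;
hence `K_k = -K_j` and `(I + tK_j)(I + tK_k) = (1 - t²)I`. The indices `1, …, 2m` pair up
palindromically with `j + k = N` and `2m + 1, …, 4m + 2` with `j + k = 3N`, so the product
collapses from the inside out to `(1 - t²)^m (1 - t²)^(m+1) I`.
-/

open Complex Matrix Finset

open scoped Real

theorem List.prod_map_range_two_mul_eq_pow {M : Type*} [Monoid M] {z : M}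
    (hz : ∀ a, Commute z a) (r : ℕ) (f : ℕ → M)
    (hf : ∀ i < r, f i * f (2 * r - 1 - i) = z) :
    ((List.range (2 * r)).map f).prod = z ^ r := by
  induction r generalizing f with
  | zero => simp
  | succ r ih =>
    have inner : ((List.range (2 * r)).map (f ∘ Nat.succ)).prod = z ^ r :=
      ih _ fun i hi => by
        simpa [show 2 * (r + 1) - 1 - (i + 1) = (2 * r - 1 - i).succ by omega]
          using hf (i + 1) (by omega)
    have outer : f 0 * f (2 * r + 1) = z := by
      simpa [show 2 * (r + 1) - 1 = 2 * r + 1 by omega] using hf 0 (by omega)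
    rw [show 2 * (r + 1) = 2 * r + 1 + 1 by ring, List.range_succ_eq_map, List.range_succ]
    simp only [List.map_cons, List.map_append, List.map_map, List.prod_cons, List.prod_append,
      List.map_nil, List.prod_nil, mul_one, inner]
    rw [← mul_assoc, ((hz (f 0)).pow_left r).eq.symm, mul_assoc, outer, pow_succ]

theorem one_add_smul_mul_one_sub_smul_s19 {R A : Type*} [CommRing R] [Ring A] [Algebra R A]
    {a : A} (ha : a * a = 1) (t : R) :
    (1 + t • a) * (1 - t • a) = (1 - t ^ 2) • (1 : A) := by
  simp only [mul_sub, add_mul, one_mul, mul_one, smul_mul_smul_comm, ha, sub_smul, one_smul]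
  module

noncomputable def expAntidiag (z : ℂ) : Matrix (Fin 2) (Fin 2) ℂ := !![0, exp z; exp (-z), 0]

theorem expAntidiag_mul_self (z : ℂ) : expAntidiag z * expAntidiag z = 1 := by
  rw [expAntidiag, mul_fin_two, one_fin_two]
  simp [← Complex.exp_add]

theorem expAntidiag_add_odd_mul_pi_mul_I (z : ℂ) {n : ℤ} (hn : Odd n) :
    expAntidiag (z + n * (π * I)) = -expAntidiag z := by
  obtain ⟨k, rfl⟩ := hn
  have h := Complex.exp_antiperiodic.odd_zsmul_antiperiodic k
  rw [zsmul_eq_mul] at h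
  push_cast at h ⊢
  rw [expAntidiag, expAntidiag, h z, neg_add, ← sub_eq_add_neg, h.sub_eq]
  simp

theorem Pprod_add (a b : ℕ) (K : ℕ → Matrix (Fin 2) (Fin 2) ℂ) (t : ℂ) :
    Pprod (a + b) K t = Pprod a K t * Pprod b (fun j => K (a + j)) t := by
  simp only [Pprod, List.range_add, List.map_append, List.prod_append, List.map_map]
  congr 3

theorem Pprod_two_mul_eq_pow {r : ℕ} {K : ℕ → Matrix (Fin 2) (Fin 2) ℂ} {t c : ℂ}
    (hK : ∀ i < r, (1 + t • K (i + 1)) * (1 + t • K (2 * r - i)) = c • 1) :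
    Pprod (2 * r) K t = c ^ r • 1 := by
  rw [Pprod, List.prod_map_range_two_mul_eq_pow (fun A => (Commute.one_left A).smul_left c) r,
    smul_pow, one_pow]
  intro i hi
  simpa [show 2 * r - 1 - i + 1 = 2 * r - i by omega] using hK i hi

theorem exists_odd_phase_shift {m N c j k : ℕ} {Φ βj βk : ℝ} (hm : m ≠ 0) (hmeven : Even m)
    (hN : N = 2 * m + 1) (hΦ : Φ = 2 * m * π / N) (hc : Odd c) (hjk : j + k = c * N)
    (hβj : βj = (-1) ^ (j + 1) * (j + N / (2 * m)))
    (hβk : βk = (-1) ^ (k + 1) * (k + N / (2 * m))) :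
    ∃ n : ℤ, Odd n ∧ Φ * βk / 2 = Φ * βj / 2 + n * π := by
  have hsign : (-1 : ℝ) ^ k = -(-1) ^ j := by
    have hodd : Odd (j + k) := hjk ▸ hc.mul (hN ▸ odd_two_mul_add_one m)
    have h := hodd.neg_one_pow (α := ℝ)
    rw [pow_add] at h
    calc (-1 : ℝ) ^ k = (-1) ^ j * ((-1) ^ j * (-1) ^ k) := by
          rw [← mul_assoc, ← pow_add, ← two_mul, pow_mul]; norm_num
      _ = -(-1) ^ j := by rw [h, mul_neg_one]
  refine ⟨(-1) ^ j * (m * c + 1),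
    odd_neg_one.pow.mul (by exact_mod_cast (hmeven.mul_right c).add_one), ?_⟩
  have hk : (k : ℝ) = c * N - j := by rw [eq_sub_iff_add_eq, add_comm]; exact_mod_cast hjk
  have hm' : (m : ℝ) ≠ 0 := by exact_mod_cast hm
  have hN' : (N : ℝ) ≠ 0 := by rw [hN]; positivity
  rw [hβj, hβk, hΦ, hk, pow_succ, pow_succ, hsign]
  push_cast
  field_simp
  ring

theorem one_sub_sq_pow_eq_sum {R : Type*} [CommRing R] (t : R) (N : ℕ) :
    (1 - t ^ 2) ^ N = ∑ k ∈ range (N + 1), (-1) ^ k * (N.choose k : R) * t ^ (2 * k) := by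
  rw [sub_eq_neg_add, add_pow]
  refine sum_congr rfl fun k _ => ?_
  rw [one_pow, mul_one, neg_pow, pow_mul]
  ring

theorem stmt19 (m : ℕ) (hm : 2 ≤ m) (hmeven : Even m)
    (N : ℕ) (hN : N = 2 * m + 1) (Φ : ℝ) (hΦ : Φ = 2 * m * Real.pi / N)
    (β : ℕ → ℝ)
    (hβ : ∀ j : ℕ, 1 ≤ j → j ≤ 4 * m + 2 →
      β j = (-1 : ℝ) ^ (j + 1) * ((j : ℝ) + (N : ℝ) / (2 * m)))
    (K : ℕ → Matrix (Fin 2) (Fin 2) ℂ)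
    (hK : ∀ j : ℕ, 1 ≤ j → j ≤ 4 * m + 2 →
      K j = !![0, Complex.exp (Complex.I * Φ * β j / 2);
               Complex.exp (-(Complex.I * Φ * β j / 2)), 0]) :
    ∀ t : ℂ,
      Pprod (4 * m + 2) K t = ((1 - t ^ 2) ^ N) • (1 : Matrix (Fin 2) (Fin 2) ℂ) ∧
      (Pprod (4 * m + 2) K t) 0 0 =
        ∑ k ∈ Finset.range (N + 1),
          (-1 : ℂ) ^ k * (N.choose k : ℂ) * t ^ (2 * k) := by
  intro t
  have pair : ∀ c j k, Odd c → 1 ≤ j → j ≤ 4 * m + 2 → 1 ≤ k → k ≤ 4 * m + 2 →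
      j + k = c * N → (1 + t • K j) * (1 + t • K k) = (1 - t ^ 2) • 1 := by
    intro c j k hc hj₁ hj₂ hk₁ hk₂ hjk
    obtain ⟨n, hn, hphase⟩ := exists_odd_phase_shift (by omega) hmeven hN hΦ hc hjk
      (hβ j hj₁ hj₂) (hβ k hk₁ hk₂)
    have hphaseC : I * Φ * β k / 2 = I * Φ * β j / 2 + n * (π * I) := by
      have := congrArg (fun x : ℝ => I * x) hphase
      push_cast at this
      linear_combination this
    have hKk : K k = -K j := by
      rw [hK j hj₁ hj₂, hK k hk₁ hk₂, hphaseC]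
      exact expAntidiag_add_odd_mul_pi_mul_I _ hn
    rw [hKk, smul_neg, ← sub_eq_add_neg, hK j hj₁ hj₂]
    exact one_add_smul_mul_one_sub_smul_s19 (expAntidiag_mul_self _) t
  have left : Pprod (2 * m) K t = (1 - t ^ 2) ^ m • 1 :=
    Pprod_two_mul_eq_pow fun i hi => pair 1 (i + 1) (2 * m - i) odd_one
      (by omega) (by omega) (by omega) (by omega) (by omega)
  have right : Pprod (2 * (m + 1)) (fun j => K (2 * m + j)) t = (1 - t ^ 2) ^ (m + 1) • 1 :=
    Pprod_two_mul_eq_pow fun i hi => pair 3 (2 * m + (i + 1)) (2 * m + (2 * (m + 1) - i))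
      (by decide) (by omega) (by omega) (by omega) (by omega) (by omega)
  have hP : Pprod (4 * m + 2) K t = (1 - t ^ 2) ^ N • 1 := by
    rw [show 4 * m + 2 = 2 * m + 2 * (m + 1) by ring, Pprod_add, left, right,
      smul_mul_smul_comm, one_mul, ← pow_add, hN, two_mul, add_assoc]
  refine ⟨hP, ?_⟩
  rw [hP, Matrix.smul_apply, one_apply_eq, smul_eq_mul, mul_one, one_sub_sq_pow_eq_sum]
end
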